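/- arXiv:2507.15363 — 8 statements merged into one kernel-verified Lean document; each statement's English description precedes it below -/
import Mathlib

section
/- Let (A_n)_{n≥1} and (B_n)_{n≥1} be sequences of complex numbers with limits A and B, let λ₁, λ₂ be the roots of λ² = Aλ + B with |λ₁| < |λ₂|, and let (a_n), (b_n) be a fundamental set of solutions of the recurrence x_{n+1} = A_n x_n + B_n x_{n−1} with a_{n+1}/a_n → λ₁ and b_{n+1}/b_n → λ₂ (terms nonzero for all large n). Then every solution of the form x_n = α a_n + β b_n with β ≠ 0 has x_n ≠ 0 for all sufficiently large n and satisfies lim_{n→∞} x_{n+1}/x_n = λ₂. -/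
/-!
Since `‖λ₁‖ < ‖λ₂‖`, the successive ratios of `aₙ / bₙ` tend to `λ₁ / λ₂`, of norm less than one,
so `aₙ / bₙ → 0` by the ratio test. Hence `xₙ / bₙ = α aₙ / bₙ + β → β ≠ 0`, and `xₙ` inherits the
ratio asymptotics of `bₙ`.
-/

open Filter Topology

/-- A solution of the two-term recurrence `x_{n+1} = A_n x_n + B_n x_{n-1}` (for `n ≥ 1`). -/
def IsSolution (A B x : ℕ → ℂ) : Prop :=
  ∀ n : ℕ, 1 ≤ n → x (n + 1) = A n * x n + B n * x (n - 1)

section RatioAsymptotics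

variable {𝕜 : Type*} [NormedField 𝕜]

theorem tendsto_ratio_div {u v : ℕ → 𝕜} {l₁ l₂ : 𝕜} (hl₂ : l₂ ≠ 0)
    (hu : Tendsto (fun n => u (n + 1) / u n) atTop (𝓝 l₁))
    (hv : Tendsto (fun n => v (n + 1) / v n) atTop (𝓝 l₂)) :
    Tendsto (fun n => u (n + 1) / v (n + 1) / (u n / v n)) atTop (𝓝 (l₁ / l₂)) := by
  exact (hu.div hv hl₂).congr fun n => div_div_div_comm _ _ _ _

theorem tendsto_zero_of_tendsto_ratio {w : ℕ → 𝕜} {l : 𝕜} (hl : ‖l‖ < 1)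
    (hw : ∀ᶠ n in atTop, w n ≠ 0) (hratio : Tendsto (fun n => w (n + 1) / w n) atTop (𝓝 l)) :
    Tendsto w atTop (𝓝 0) := by
  have hnorm : Tendsto (fun n => ‖‖w (n + 1)‖‖ / ‖‖w n‖‖) atTop (𝓝 ‖l‖) := by
    simpa only [norm_norm, norm_div] using hratio.norm
  have hsum : Summable fun n => ‖w n‖ :=
    summable_of_ratio_test_tendsto_lt_one hl (by simpa only [ne_eq, norm_eq_zero] using hw) hnorm
  exact tendsto_zero_iff_norm_tendsto_zero.mpr hsum.tendsto_atTop_zero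

theorem tendsto_div_zero_of_norm_lt {u v : ℕ → 𝕜} {l₁ l₂ : 𝕜} (hl : ‖l₁‖ < ‖l₂‖)
    (hu0 : ∀ᶠ n in atTop, u n ≠ 0) (hv0 : ∀ᶠ n in atTop, v n ≠ 0)
    (hu : Tendsto (fun n => u (n + 1) / u n) atTop (𝓝 l₁))
    (hv : Tendsto (fun n => v (n + 1) / v n) atTop (𝓝 l₂)) :
    Tendsto (fun n => u n / v n) atTop (𝓝 0) := by
  have hl₂ : l₂ ≠ 0 := norm_pos_iff.mp ((norm_nonneg l₁).trans_lt hl)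
  refine tendsto_zero_of_tendsto_ratio ?_ ?_ (tendsto_ratio_div hl₂ hu hv)
  · rwa [norm_div, div_lt_one (norm_pos_iff.mpr hl₂)]
  · filter_upwards [hu0, hv0] with n hun hvn using div_ne_zero hun hvn

theorem eventually_ne_zero_of_tendsto_div {y v : ℕ → 𝕜} {c : 𝕜} (hc : c ≠ 0)
    (hyv : Tendsto (fun n => y n / v n) atTop (𝓝 c)) : ∀ᶠ n in atTop, y n ≠ 0 := by
  filter_upwards [hyv.eventually_ne hc] with n hn hy
  exact hn (by rw [hy, zero_div])

theorem tendsto_ratio_of_tendsto_div {y v : ℕ → 𝕜} {c l : 𝕜} (hc : c ≠ 0)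
    (hyv : Tendsto (fun n => y n / v n) atTop (𝓝 c)) (hv0 : ∀ᶠ n in atTop, v n ≠ 0)
    (hv : Tendsto (fun n => v (n + 1) / v n) atTop (𝓝 l)) :
    Tendsto (fun n => y (n + 1) / y n) atTop (𝓝 l) := by
  have hlim : Tendsto (fun n => y (n + 1) / v (n + 1) * (v (n + 1) / v n) / (y n / v n))
      atTop (𝓝 (c * l / c)) :=
    ((hyv.comp (tendsto_add_atTop_nat 1)).mul hv).div hyv hc
  rw [mul_div_cancel_left₀ l hc] at hlim
  refine hlim.congr' ?_
  filter_upwards [hv0, (tendsto_add_atTop_nat 1).eventually hv0] with n hvn hvn'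
  field_simp

end RatioAsymptotics

theorem poincare_perron_dominant_general
    (lam₁ lam₂ : ℂ)
    (hmod : ‖lam₁‖ < ‖lam₂‖)
    (a b : ℕ → ℂ)
    (ha0 : ∀ᶠ n in atTop, a n ≠ 0) (hb0 : ∀ᶠ n in atTop, b n ≠ 0)
    (haratio : Tendsto (fun n => a (n + 1) / a n) atTop (𝓝 lam₁))
    (hbratio : Tendsto (fun n => b (n + 1) / b n) atTop (𝓝 lam₂))
    (α β : ℂ) (hβ : β ≠ 0)
    (x : ℕ → ℂ) (hx : ∀ n : ℕ, x n = α * a n + β * b n) :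
    (∀ᶠ n in atTop, x n ≠ 0) ∧
      Tendsto (fun n => x (n + 1) / x n) atTop (𝓝 lam₂) := by
  have hab : Tendsto (fun n => a n / b n) atTop (𝓝 0) :=
    tendsto_div_zero_of_norm_lt hmod ha0 hb0 haratio hbratio
  have hxb : Tendsto (fun n => x n / b n) atTop (𝓝 β) := by
    have hlim : Tendsto (fun n => α * (a n / b n) + β) atTop (𝓝 (α * 0 + β)) :=
      (hab.const_mul α).add_const β
    rw [mul_zero, zero_add] at hlim
    refine hlim.congr' ?_
    filter_upwards [hb0] with n hbn
    rw [hx n]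
    field_simp
  exact ⟨eventually_ne_zero_of_tendsto_div hβ hxb,
    tendsto_ratio_of_tendsto_div hβ hxb hb0 hbratio⟩

/-- Any solution `x = α a + β b` with `β ≠ 0`, where `(a, b)` is a fundamental set of
solutions with `a_{n+1}/a_n → λ₁` and `b_{n+1}/b_n → λ₂`, is eventually nonzero and
satisfies `x_{n+1}/x_n → λ₂`. -/
theorem poincare_perron_dominant
    (A B : ℕ → ℂ) (Alim Blim : ℂ)
    (hA : Tendsto A atTop (𝓝 Alim))
    (hB : Tendsto B atTop (𝓝 Blim))
    (lam₁ lam₂ : ℂ)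
    (h₁ : lam₁ ^ 2 = Alim * lam₁ + Blim)
    (h₂ : lam₂ ^ 2 = Alim * lam₂ + Blim)
    (hmod : ‖lam₁‖ < ‖lam₂‖)
    (a b : ℕ → ℂ)
    (ha : IsSolution A B a) (hb : IsSolution A B b)
    (ha0 : ∀ᶠ n in atTop, a n ≠ 0) (hb0 : ∀ᶠ n in atTop, b n ≠ 0)
    (haratio : Tendsto (fun n => a (n + 1) / a n) atTop (𝓝 lam₁))
    (hbratio : Tendsto (fun n => b (n + 1) / b n) atTop (𝓝 lam₂))
    (α β : ℂ) (hβ : β ≠ 0)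
    (x : ℕ → ℂ) (hx : ∀ n : ℕ, x n = α * a n + β * b n) :
    (∀ᶠ n in atTop, x n ≠ 0) ∧
      Tendsto (fun n => x (n + 1) / x n) atTop (𝓝 lam₂) :=
  poincare_perron_dominant_general lam₁ lam₂ hmod a b ha0 hb0 haratio hbratio α β hβ x hx
end

section
/- Let (a_n)_{n≥0} be a complex sequence whose terms are nonzero for all sufficiently large n and which satisfies, for all n ≥ 2, a_n = [(n+iε)(n+2iκε+iε−2s−1) − λ + ε² + κ(2τ−i)ε] / (2iεκ n) · a_{n−1} + [(n+2iε−1)(iτ − (n−s+iε−1))] / (2iεκ n) · a_{n−2}. If the limit c = lim_{n→∞} a_n/(n·a_{n−1}) exists and c ≠ 0, then c = 1/(2iεκ). In particular the coefficients of the formal asymptotic series at infinity grow factorially, so the series has zero radius of convergence. -/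
open Filter Topology Complex

/-!
Dividing the recurrence by `n a_{n-1}` writes the ratio `r_n = a_n / (n a_{n-1})` as
`α_n / n + (β_n / n) · a_{n-2} / a_{n-1}`, where `α_n`, `β_n` are the two coefficients.
Both `α_n / n` and `β_n / n` converge (to `1/(2iεκ)` and `-1/(2iεκ)`, since the numerators are
quadratic in `n` with leading coefficients `1` and `-1`), while `a_{n-2} / a_{n-1} = 1/((n-1) r_{n-1})`
tends to `0` because `r_{n-1} → c ≠ 0`. Hence `r_n → 1/(2iεκ)`.
-/

section RatioLimit

variable {𝕜 : Type*} [RCLike 𝕜]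

theorem tendsto_mul_add_div_sq (u v w : 𝕜) :
    Tendsto (fun n : ℕ ↦ (((n : 𝕜) + u) * ((n : 𝕜) + v) + w) / (n : 𝕜) ^ 2) atTop (𝓝 1) := by
  have hf : Tendsto (fun z : 𝕜 ↦ (1 + u * z) * (1 + v * z) + w * z ^ 2) (𝓝 0) (𝓝 1) :=
    (by fun_prop : Continuous _).tendsto' 0 1 (by ring)
  refine (hf.comp tendsto_inv_atTop_nhds_zero_nat).congr' ?_
  filter_upwards [eventually_ne_atTop 0] with n hn
  have hn' : (n : 𝕜) ≠ 0 := Nat.cast_ne_zero.2 hn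
  simp only [Function.comp_apply]
  field_simp

theorem tendsto_pred_div_self_of_tendsto_div_mul_pred {x : ℕ → 𝕜} {c : 𝕜}
    (hc : Tendsto (fun n ↦ x n / (n * x (n - 1))) atTop (𝓝 c)) (hc0 : c ≠ 0) :
    Tendsto (fun n ↦ x (n - 1) / x n) atTop (𝓝 0) := by
  have h : Tendsto (fun n : ℕ ↦ (n : 𝕜)⁻¹ * (x n / (n * x (n - 1)))⁻¹) atTop (𝓝 (0 * c⁻¹)) :=
    tendsto_inv_atTop_nhds_zero_nat.mul (hc.inv₀ hc0)
  rw [zero_mul] at h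
  refine h.congr' ?_
  filter_upwards [eventually_ne_atTop 0] with n hn
  have hn' : (n : 𝕜) ≠ 0 := Nat.cast_ne_zero.2 hn
  rw [inv_div, ← mul_div_assoc, ← mul_assoc, inv_mul_cancel₀ hn', one_mul]

theorem eq_of_tendsto_div_mul_pred_of_recurrence {x α β : ℕ → 𝕜} {A B c : 𝕜}
    (hrec : ∀ n, 2 ≤ n → x n = α n * x (n - 1) + β n * x (n - 2))
    (hα : Tendsto (fun n ↦ α n / n) atTop (𝓝 A)) (hβ : Tendsto (fun n ↦ β n / n) atTop (𝓝 B))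
    (hc : Tendsto (fun n ↦ x n / (n * x (n - 1))) atTop (𝓝 c)) (hc0 : c ≠ 0) :
    c = A := by
  have hx : ∀ᶠ n in atTop, x n ≠ 0 :=
    (hc.eventually_ne hc0).mono fun n hn hxn ↦ hn (by rw [hxn, zero_div])
  have hquot : Tendsto (fun n ↦ x (n - 2) / x (n - 1)) atTop (𝓝 0) :=
    (tendsto_pred_div_self_of_tendsto_div_mul_pred hc hc0).comp (tendsto_sub_atTop_nat 1)
  have hlim : Tendsto (fun n ↦ α n / n + β n / n * (x (n - 2) / x (n - 1))) atTop
      (𝓝 (A + B * 0)) := hα.add (hβ.mul hquot)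
  rw [mul_zero, add_zero] at hlim
  refine tendsto_nhds_unique hc (hlim.congr' ?_)
  filter_upwards [eventually_ge_atTop 2, tendsto_sub_atTop_nat 1 |>.eventually hx]
    with n hn hx1
  have hn' : (n : 𝕜) ≠ 0 := Nat.cast_ne_zero.2 (by omega)
  rw [hrec n hn]
  field_simp

end RatioLimit

theorem infinity_ingoing_coefficient_ratio_general
    (s : ℤ) (lam : ℂ) (κ : ℝ) (ε τ : ℂ) (x : ℕ → ℂ)
    (hrec : ∀ n : ℕ, 2 ≤ n →
      x n = ((((n : ℂ) + I * ε) * ((n : ℂ) + 2 * I * (κ : ℂ) * ε + I * ε - 2 * (s : ℂ) - 1)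
              - lam + ε ^ 2 + (κ : ℂ) * (2 * τ - I) * ε)
            / (2 * I * ε * (κ : ℂ) * (n : ℂ))) * x (n - 1)
          + ((((n : ℂ) + 2 * I * ε - 1) * (I * τ - ((n : ℂ) - (s : ℂ) + I * ε - 1)))
            / (2 * I * ε * (κ : ℂ) * (n : ℂ))) * x (n - 2))
    (c : ℂ) (hc : Tendsto (fun n => x n / ((n : ℂ) * x (n - 1))) atTop (𝓝 c))
    (hc0 : c ≠ 0) :
    c = 1 / (2 * I * ε * (κ : ℂ)) := by
  set D := 2 * I * ε * (κ : ℂ)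
  have hα : Tendsto (fun n : ℕ ↦ (((n : ℂ) + I * ε) * ((n : ℂ) + 2 * I * κ * ε + I * ε - 2 * s - 1)
      - lam + ε ^ 2 + κ * (2 * τ - I) * ε) / (D * n) / n) atTop (𝓝 (1 / D)) :=
    ((tendsto_mul_add_div_sq (I * ε) (2 * I * κ * ε + I * ε - 2 * s - 1)
      (-lam + ε ^ 2 + κ * (2 * τ - I) * ε)).div_const D).congr fun n ↦ by ring
  have hβ : Tendsto (fun n : ℕ ↦ (((n : ℂ) + 2 * I * ε - 1) * (I * τ - ((n : ℂ) - s + I * ε - 1)))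
      / (D * n) / n) atTop (𝓝 (-1 / D)) :=
    ((tendsto_mul_add_div_sq (2 * I * ε - 1) (-(I * τ + s - I * ε + 1)) 0).neg.div_const
      D).congr fun n ↦ by ring
  exact eq_of_tendsto_div_mul_pred_of_recurrence hrec hα hβ hc hc0

/-- The coefficients of the formal asymptotic expansion at infinity of the ingoing solution
satisfy `a_n / (n a_{n-1}) → 1/(2iεκ)` (when the limit exists and is nonzero). -/
theorem infinity_ingoing_coefficient_ratio
    (a : ℝ) (ha : |a| < 1) (s m : ℤ) (ω lam : ℂ) (hω : ω ≠ 0)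
    (κ : ℝ) (hκ : κ = Real.sqrt (1 - a ^ 2))
    (ε τ : ℂ) (hε : ε = 2 * ω) (hτ : τ = (ε - (m : ℂ) * (a : ℂ)) / (κ : ℂ))
    (x : ℕ → ℂ)
    (hx0 : ∀ᶠ n in atTop, x n ≠ 0)
    (hrec : ∀ n : ℕ, 2 ≤ n →
      x n = ((((n : ℂ) + I * ε) * ((n : ℂ) + 2 * I * (κ : ℂ) * ε + I * ε - 2 * (s : ℂ) - 1)
              - lam + ε ^ 2 + (κ : ℂ) * (2 * τ - I) * ε)
            / (2 * I * ε * (κ : ℂ) * (n : ℂ))) * x (n - 1)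
          + ((((n : ℂ) + 2 * I * ε - 1) * (I * τ - ((n : ℂ) - (s : ℂ) + I * ε - 1)))
            / (2 * I * ε * (κ : ℂ) * (n : ℂ))) * x (n - 2))
    (c : ℂ) (hc : Tendsto (fun n => x n / ((n : ℂ) * x (n - 1))) atTop (𝓝 c))
    (hc0 : c ≠ 0) :
    c = 1 / (2 * I * ε * (κ : ℂ)) :=
  infinity_ingoing_coefficient_ratio_general s lam κ ε τ x hrec c hc hc0
end

section
/- Define ι : (−∞,0) → ℂ by ι(x) = e^{2iκεx} · (1−x)^{s−iτ+iε+1} · (−x)^{1−s−iτ−iε}, where the powers are of positive real bases (i.e. t^c = exp(c·log t) with the real logarithm of t > 0). If P₁, P₂ : (−∞,0) → ℂ are twice differentiable and both satisfy Equation (P) on (−∞,0), then the function x ↦ ι(x) · (P₁(x)P₂′(x) − P₁′(x)P₂(x)) is constant on (−∞,0). -/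
open Set Complex

/-!
The factor `ι` is an integrating factor for Equation (P): writing the equation as
`p P'' + q₁ P' + q₂ P = 0` with `p x = x (1 - x)`, one has `p ι' = q₁ ι` on `(−∞, 0)`.
Abel's identity then says that `ι` times the Wronskian of two solutions has zero derivative,
since `p (P₁ P₂'' - P₁'' P₂) = -q₁ (P₁ P₂' - P₁' P₂)` and the `q₂` terms cancel.
-/

section Wronskian

variable {P₁ P₂ : ℝ → ℂ}

theorem hasDerivAt_wronskian {z : ℝ} (h₁ : DifferentiableAt ℝ P₁ z)
    (h₁' : DifferentiableAt ℝ (deriv P₁) z) (h₂ : DifferentiableAt ℝ P₂ z)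
    (h₂' : DifferentiableAt ℝ (deriv P₂) z) :
    HasDerivAt (fun t => P₁ t * deriv P₂ t - deriv P₁ t * P₂ t)
      (P₁ z * deriv (deriv P₂) z - deriv (deriv P₁) z * P₂ z) z := by
  refine ((h₁.hasDerivAt.mul h₂'.hasDerivAt).sub (h₁'.hasDerivAt.mul h₂.hasDerivAt)).congr_deriv ?_
  ring

theorem hasDerivAt_mul_wronskian_eq_zero {z : ℝ} {p q r μ' : ℂ} {μ : ℝ → ℂ}
    (hμ : HasDerivAt μ μ' z) (hp : p ≠ 0) (hμq : p * μ' = q * μ z)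
    (h₁ : DifferentiableAt ℝ P₁ z) (h₁' : DifferentiableAt ℝ (deriv P₁) z)
    (h₂ : DifferentiableAt ℝ P₂ z) (h₂' : DifferentiableAt ℝ (deriv P₂) z)
    (heq₁ : p * deriv (deriv P₁) z + q * deriv P₁ z + r * P₁ z = 0)
    (heq₂ : p * deriv (deriv P₂) z + q * deriv P₂ z + r * P₂ z = 0) :
    HasDerivAt (fun t => μ t * (P₁ t * deriv P₂ t - deriv P₁ t * P₂ t)) 0 z := by
  refine (hμ.mul (hasDerivAt_wronskian h₁ h₁' h₂ h₂')).congr_deriv ?_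
  refine mul_left_cancel₀ hp ?_
  linear_combination (P₁ z * deriv P₂ z - deriv P₁ z * P₂ z) * hμq
    + μ z * (P₁ z * heq₂ - P₂ z * heq₁)

theorem IsOpen.mul_wronskian_eq {s : Set ℝ} (hs : IsOpen s) (hs' : IsPreconnected s)
    {p q r μ μ' : ℝ → ℂ} (hμ : ∀ t ∈ s, HasDerivAt μ (μ' t) t) (hp : ∀ t ∈ s, p t ≠ 0)
    (hμq : ∀ t ∈ s, p t * μ' t = q t * μ t)
    (h₁ : ∀ t ∈ s, DifferentiableAt ℝ P₁ t) (h₁' : ∀ t ∈ s, DifferentiableAt ℝ (deriv P₁) t)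
    (h₂ : ∀ t ∈ s, DifferentiableAt ℝ P₂ t) (h₂' : ∀ t ∈ s, DifferentiableAt ℝ (deriv P₂) t)
    (heq₁ : ∀ t ∈ s, p t * deriv (deriv P₁) t + q t * deriv P₁ t + r t * P₁ t = 0)
    (heq₂ : ∀ t ∈ s, p t * deriv (deriv P₂) t + q t * deriv P₂ t + r t * P₂ t = 0)
    {x y : ℝ} (hx : x ∈ s) (hy : y ∈ s) :
    μ x * (P₁ x * deriv P₂ x - deriv P₁ x * P₂ x)
      = μ y * (P₁ y * deriv P₂ y - deriv P₁ y * P₂ y) := by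
  have hderiv : ∀ t ∈ s,
      HasDerivAt (fun t => μ t * (P₁ t * deriv P₂ t - deriv P₁ t * P₂ t)) 0 t :=
    fun t ht => hasDerivAt_mul_wronskian_eq_zero (hμ t ht) (hp t ht) (hμq t ht)
      (h₁ t ht) (h₁' t ht) (h₂ t ht) (h₂' t ht) (heq₁ t ht) (heq₂ t ht)
  exact hs.is_const_of_deriv_eq_zero hs'
    (fun t ht => (hderiv t ht).differentiableAt.differentiableWithinAt)
    (fun t ht => (hderiv t ht).deriv) hx hy

end Wronskian

theorem hasDerivAt_cexp_mul_log {f : ℝ → ℝ} {f' x : ℝ} (hf : HasDerivAt f f' x)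
    (hx : f x ≠ 0) (c : ℂ) :
    HasDerivAt (fun t => exp (c * Real.log (f t)))
      (exp (c * Real.log (f x)) * (c * (f' : ℂ) / (f x : ℂ))) x := by
  refine ((hf.log hx).ofReal_comp.const_mul c).cexp.congr_deriv ?_
  push_cast
  ring

noncomputable def abelFactor (c₁ c₂ c₃ : ℂ) (t : ℝ) : ℂ :=
  exp (c₁ * t) * exp (c₂ * Real.log (1 - t)) * exp (c₃ * Real.log (-t))

theorem hasDerivAt_abelFactor (c₁ c₂ c₃ : ℂ) {z : ℝ} (hz : z < 0) :
    HasDerivAt (abelFactor c₁ c₂ c₃)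
      (abelFactor c₁ c₂ c₃ z * (c₁ - c₂ / (1 - z) + c₃ / z)) z := by
  have hexp : HasDerivAt (fun t : ℝ => exp (c₁ * t)) (exp (c₁ * z) * c₁) z := by
    simpa using ((hasDerivAt_id z).ofReal_comp.const_mul c₁).cexp
  have hpos : HasDerivAt (fun t => exp (c₂ * Real.log (1 - t)))
      (exp (c₂ * Real.log (1 - z)) * (c₂ * ((-1 : ℝ) : ℂ) / ((1 - z : ℝ) : ℂ))) z :=
    hasDerivAt_cexp_mul_log ((hasDerivAt_id z).const_sub 1) (sub_pos.2 (hz.trans one_pos)).ne' c₂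
  have hneg : HasDerivAt (fun t => exp (c₃ * Real.log (-t)))
      (exp (c₃ * Real.log (-z)) * (c₃ * ((-1 : ℝ) : ℂ) / ((-z : ℝ) : ℂ))) z :=
    hasDerivAt_cexp_mul_log (hasDerivAt_id z).neg (neg_pos.2 hz).ne' c₃
  have h1z : (1 - z : ℂ) ≠ 0 := by exact_mod_cast (show 1 - z ≠ 0 by linarith)
  have hz0 : (z : ℂ) ≠ 0 := by exact_mod_cast hz.ne
  refine ((hexp.mul hpos).mul hneg).congr_deriv ?_
  simp only [abelFactor, Pi.mul_apply]
  push_cast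
  field_simp
  ring

theorem wronskian_constant_eqP_general
    (s : ℤ)
    (κ : ℝ)
    (ε τ : ℂ)
    (ι : ℝ → ℂ)
    (hι : ∀ x : ℝ, x < 0 →
      ι x = Complex.exp (2 * I * (κ : ℂ) * ε * (x : ℂ))
        * Complex.exp (((s : ℂ) - I * τ + I * ε + 1) * (Real.log (1 - x) : ℂ))
        * Complex.exp ((1 - (s : ℂ) - I * τ - I * ε) * (Real.log (-x) : ℂ)))
    (q₁ q₂ : ℝ → ℂ)
    (hq₁ : ∀ x : ℝ, q₁ x = (1 - (s : ℂ) - I * ε - I * τ)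
      - 2 * (1 - I * ε * (κ : ℂ) - I * τ) * (x : ℂ) - 2 * I * ε * (κ : ℂ) * (x : ℂ) ^ 2)
    (P₁ P₂ : ℝ → ℂ)
    (hP₁ : ∀ x ∈ Iio (0 : ℝ), DifferentiableAt ℝ P₁ x)
    (hP₁' : ∀ x ∈ Iio (0 : ℝ), DifferentiableAt ℝ (deriv P₁) x)
    (hP₂ : ∀ x ∈ Iio (0 : ℝ), DifferentiableAt ℝ P₂ x)
    (hP₂' : ∀ x ∈ Iio (0 : ℝ), DifferentiableAt ℝ (deriv P₂) x)
    (heq₁ : ∀ x ∈ Iio (0 : ℝ),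
      (x : ℂ) * (1 - (x : ℂ)) * deriv (deriv P₁) x + q₁ x * deriv P₁ x + q₂ x * P₁ x = 0)
    (heq₂ : ∀ x ∈ Iio (0 : ℝ),
      (x : ℂ) * (1 - (x : ℂ)) * deriv (deriv P₂) x + q₁ x * deriv P₂ x + q₂ x * P₂ x = 0) :
    ∀ x ∈ Iio (0 : ℝ), ∀ y ∈ Iio (0 : ℝ),
      ι x * (P₁ x * deriv P₂ x - deriv P₁ x * P₂ x)
        = ι y * (P₁ y * deriv P₂ y - deriv P₁ y * P₂ y) := by
  intro x hx y hy
  set c₁ : ℂ := 2 * I * κ * ε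
  set c₂ : ℂ := s - I * τ + I * ε + 1
  set c₃ : ℂ := 1 - s - I * τ - I * ε
  have hp : ∀ t ∈ Iio (0 : ℝ), (t : ℂ) * (1 - t) ≠ 0 := fun t (ht : t < 0) =>
    mul_ne_zero (by exact_mod_cast ht.ne) (by exact_mod_cast (show 1 - t ≠ 0 by linarith))
  have hq : ∀ t ∈ Iio (0 : ℝ), (t : ℂ) * (1 - t) * (c₁ - c₂ / (1 - t) + c₃ / t) = q₁ t := by
    intro t ht
    have ht0 : (t : ℂ) ≠ 0 := left_ne_zero_of_mul (hp t ht)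
    have ht1 : (1 - t : ℂ) ≠ 0 := right_ne_zero_of_mul (hp t ht)
    rw [hq₁]
    field_simp
    ring
  rw [hι x hx, hι y hy]
  exact isOpen_Iio.mul_wronskian_eq (μ := abelFactor c₁ c₂ c₃) isPreconnected_Iio
    (fun t ht => hasDerivAt_abelFactor c₁ c₂ c₃ ht) hp
    (fun t ht => by rw [mul_left_comm, hq t ht, mul_comm])
    hP₁ hP₁' hP₂ hP₂' heq₁ heq₂ hx hy

/-- The function `ι(x) ⋅ (P₁ P₂′ − P₁′ P₂)` built from two solutions of Equation (P) is
constant on `(−∞, 0)`, where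
`ι(x) = e^{2iκεx} (1−x)^{s−iτ+iε+1} (−x)^{1−s−iτ−iε}` (positive real bases). -/
theorem wronskian_constant_eqP
    (a : ℝ) (ha : |a| < 1) (s m : ℤ) (ω lam : ℂ) (hω : ω ≠ 0)
    (κ : ℝ) (hκ : κ = Real.sqrt (1 - a ^ 2))
    (ε τ : ℂ) (hε : ε = 2 * ω) (hτ : τ = (ε - (m : ℂ) * (a : ℂ)) / (κ : ℂ))
    (ι : ℝ → ℂ)
    (hι : ∀ x : ℝ, x < 0 →
      ι x = Complex.exp (2 * I * (κ : ℂ) * ε * (x : ℂ))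
        * Complex.exp (((s : ℂ) - I * τ + I * ε + 1) * (Real.log (1 - x) : ℂ))
        * Complex.exp ((1 - (s : ℂ) - I * τ - I * ε) * (Real.log (-x) : ℂ)))
    (q₁ q₂ : ℝ → ℂ)
    (hq₁ : ∀ x : ℝ, q₁ x = (1 - (s : ℂ) - I * ε - I * τ)
      - 2 * (1 - I * ε * (κ : ℂ) - I * τ) * (x : ℂ) - 2 * I * ε * (κ : ℂ) * (x : ℂ) ^ 2)
    (hq₂ : ∀ x : ℝ, q₂ x = lam - ε ^ 2 + I * ε * (κ : ℂ) * (1 - 2 * (s : ℂ))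
      + (s : ℂ) * ((s : ℂ) + 1) + τ * (I + τ) + 2 * ε * (κ : ℂ) * (-I + I * (s : ℂ) + ε - τ) * (x : ℂ))
    (P₁ P₂ : ℝ → ℂ)
    (hP₁ : ∀ x ∈ Iio (0 : ℝ), DifferentiableAt ℝ P₁ x)
    (hP₁' : ∀ x ∈ Iio (0 : ℝ), DifferentiableAt ℝ (deriv P₁) x)
    (hP₂ : ∀ x ∈ Iio (0 : ℝ), DifferentiableAt ℝ P₂ x)
    (hP₂' : ∀ x ∈ Iio (0 : ℝ), DifferentiableAt ℝ (deriv P₂) x)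
    (heq₁ : ∀ x ∈ Iio (0 : ℝ),
      (x : ℂ) * (1 - (x : ℂ)) * deriv (deriv P₁) x + q₁ x * deriv P₁ x + q₂ x * P₁ x = 0)
    (heq₂ : ∀ x ∈ Iio (0 : ℝ),
      (x : ℂ) * (1 - (x : ℂ)) * deriv (deriv P₂) x + q₁ x * deriv P₂ x + q₂ x * P₂ x = 0) :
    ∀ x ∈ Iio (0 : ℝ), ∀ y ∈ Iio (0 : ℝ),
      ι x * (P₁ x * deriv P₂ x - deriv P₁ x * P₂ x)
        = ι y * (P₁ y * deriv P₂ y - deriv P₁ y * P₂ y) :=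
  wronskian_constant_eqP_general s κ ε τ ι hι q₁ q₂ hq₁ P₁ P₂ hP₁ hP₁' hP₂ hP₂' heq₁ heq₂
end

section
/- (Invariance of the Wronskian under a change of dependent variable.) Let I ⊆ ℝ be an open interval, let f, g : I → ℂ be continuous, and let w₁, w₂ : I → ℂ be twice differentiable functions satisfying w_j″ + f w_j′ + g w_j = 0 on I for j = 1, 2. Let t₁, t₂ : I → ℂ be differentiable, and set v_j = t₁ w_j + t₂ w_j′ for j = 1, 2, and h = t₁(t₂′ − f t₂) + t₂(g t₂ − t₁′) + t₁². Then for every x ∈ I, v₁(x)v₂′(x) − v₁′(x)v₂(x) = h(x) · (w₁(x)w₂′(x) − w₁′(x)w₂(x)). Consequently, if F is an antiderivative of f on I, then exp(F(x)) · (v₁v₂′ − v₁′v₂)(x) = h(x) · C for all x ∈ I, where C is the constant value of exp(F) · (w₁w₂′ − w₁′w₂); i.e. the Wronskian constant is unchanged by the transformation v = t₁w + t₂w′. -/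
/-!
Abel's identity `W' = -f W` for the Wronskian `W = w₁ w₂' - w₁' w₂` of two solutions makes
`exp F · W` constant. For `v = t₁ w + t₂ w'` the equation gives
`v' = (t₁' - g t₂) w + (t₁ + t₂' - f t₂) w'`, so `(v₁, v₂)` is obtained from `(w₁, w₂)` by one and
the same `2 × 2` matrix acting on `(w, w')`, whose determinant is `h`; hence
`W(v₁, v₂) = h · W(w₁, w₂)`.
-/

open Set

section Wronskian

variable {𝕜 𝔸 : Type*} [NontriviallyNormedField 𝕜] [NormedCommRing 𝔸] [NormedAlgebra 𝕜 𝔸]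

/-- The paper's `𝓘(u, v, x)`. -/
noncomputable def wronskian (u v : 𝕜 → 𝔸) (x : 𝕜) : 𝔸 := u x * deriv v x - deriv u x * v x

variable {u v w₁ w₂ f g t₁ t₂ w : 𝕜 → 𝔸} {x : 𝕜}

theorem hasDerivAt_wronskian_s9 (hu : DifferentiableAt 𝕜 u x) (hu' : DifferentiableAt 𝕜 (deriv u) x)
    (hv : DifferentiableAt 𝕜 v x) (hv' : DifferentiableAt 𝕜 (deriv v) x) :
    HasDerivAt (wronskian u v) (u x * deriv (deriv v) x - deriv (deriv u) x * v x) x :=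
  ((hu.hasDerivAt.mul hv'.hasDerivAt).sub (hu'.hasDerivAt.mul hv.hasDerivAt)).congr_deriv (by ring)

theorem hasDerivAt_wronskian_of_ode
    (hw₁ : DifferentiableAt 𝕜 w₁ x) (hw₁' : DifferentiableAt 𝕜 (deriv w₁) x)
    (hw₂ : DifferentiableAt 𝕜 w₂ x) (hw₂' : DifferentiableAt 𝕜 (deriv w₂) x)
    (heq₁ : deriv (deriv w₁) x + f x * deriv w₁ x + g x * w₁ x = 0)
    (heq₂ : deriv (deriv w₂) x + f x * deriv w₂ x + g x * w₂ x = 0) :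
    HasDerivAt (wronskian w₁ w₂) (-(f x * wronskian w₁ w₂ x)) x :=
  (hasDerivAt_wronskian_s9 hw₁ hw₁' hw₂ hw₂').congr_deriv <| by
    unfold wronskian
    linear_combination w₁ x * heq₂ - w₂ x * heq₁

theorem hasDerivAt_transform_of_ode (hw : DifferentiableAt 𝕜 w x)
    (hw' : DifferentiableAt 𝕜 (deriv w) x) (ht₁ : DifferentiableAt 𝕜 t₁ x)
    (ht₂ : DifferentiableAt 𝕜 t₂ x) (heq : deriv (deriv w) x + f x * deriv w x + g x * w x = 0) :
    HasDerivAt (fun y ↦ t₁ y * w y + t₂ y * deriv w y)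
      ((deriv t₁ x - g x * t₂ x) * w x + (t₁ x + deriv t₂ x - f x * t₂ x) * deriv w x) x :=
  ((ht₁.hasDerivAt.mul hw.hasDerivAt).add (ht₂.hasDerivAt.mul hw'.hasDerivAt)).congr_deriv <| by
    linear_combination t₂ x * heq

theorem wronskian_transform_of_ode
    (hw₁ : DifferentiableAt 𝕜 w₁ x) (hw₁' : DifferentiableAt 𝕜 (deriv w₁) x)
    (hw₂ : DifferentiableAt 𝕜 w₂ x) (hw₂' : DifferentiableAt 𝕜 (deriv w₂) x)
    (ht₁ : DifferentiableAt 𝕜 t₁ x) (ht₂ : DifferentiableAt 𝕜 t₂ x)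
    (heq₁ : deriv (deriv w₁) x + f x * deriv w₁ x + g x * w₁ x = 0)
    (heq₂ : deriv (deriv w₂) x + f x * deriv w₂ x + g x * w₂ x = 0) :
    wronskian (fun y ↦ t₁ y * w₁ y + t₂ y * deriv w₁ y) (fun y ↦ t₁ y * w₂ y + t₂ y * deriv w₂ y) x
      = (t₁ x * (deriv t₂ x - f x * t₂ x) + t₂ x * (g x * t₂ x - deriv t₁ x) + t₁ x ^ 2)
        * wronskian w₁ w₂ x := by
  unfold wronskian
  rw [(hasDerivAt_transform_of_ode hw₁ hw₁' ht₁ ht₂ heq₁).deriv,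
    (hasDerivAt_transform_of_ode hw₂ hw₂' ht₁ ht₂ heq₂).deriv]
  ring

end Wronskian

theorem hasDerivAt_cexp_mul_eq_zero {𝕜 : Type*} [NontriviallyNormedField 𝕜] [NormedAlgebra 𝕜 ℂ]
    {F f W : 𝕜 → ℂ} {x : 𝕜} (hF : HasDerivAt F (f x) x) (hW : HasDerivAt W (-(f x * W x)) x) :
    HasDerivAt (fun y ↦ Complex.exp (F y) * W y) 0 x :=
  (hF.cexp.mul hW).congr_deriv (by ring)

theorem wronskian_invariance_dependent_variable_general
    (p q : ℝ) (f g F w₁ w₂ t₁ t₂ : ℝ → ℂ)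
    (hF : ∀ x ∈ Ioo p q, HasDerivAt F (f x) x)
    (hw₁ : ∀ x ∈ Ioo p q, DifferentiableAt ℝ w₁ x)
    (hw₁' : ∀ x ∈ Ioo p q, DifferentiableAt ℝ (deriv w₁) x)
    (hw₂ : ∀ x ∈ Ioo p q, DifferentiableAt ℝ w₂ x)
    (hw₂' : ∀ x ∈ Ioo p q, DifferentiableAt ℝ (deriv w₂) x)
    (heq₁ : ∀ x ∈ Ioo p q, deriv (deriv w₁) x + f x * deriv w₁ x + g x * w₁ x = 0)
    (heq₂ : ∀ x ∈ Ioo p q, deriv (deriv w₂) x + f x * deriv w₂ x + g x * w₂ x = 0)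
    (ht₁ : ∀ x ∈ Ioo p q, DifferentiableAt ℝ t₁ x)
    (ht₂ : ∀ x ∈ Ioo p q, DifferentiableAt ℝ t₂ x)
    (v₁ v₂ h : ℝ → ℂ)
    (hv₁ : ∀ x, v₁ x = t₁ x * w₁ x + t₂ x * deriv w₁ x)
    (hv₂ : ∀ x, v₂ x = t₁ x * w₂ x + t₂ x * deriv w₂ x)
    (hh : ∀ x, h x = t₁ x * (deriv t₂ x - f x * t₂ x)
      + t₂ x * (g x * t₂ x - deriv t₁ x) + t₁ x ^ 2) :
    (∀ x ∈ Ioo p q,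
      v₁ x * deriv v₂ x - deriv v₁ x * v₂ x
        = h x * (w₁ x * deriv w₂ x - deriv w₁ x * w₂ x)) ∧
    ∃ C : ℂ,
      (∀ x ∈ Ioo p q,
        Complex.exp (F x) * (w₁ x * deriv w₂ x - deriv w₁ x * w₂ x) = C) ∧
      (∀ x ∈ Ioo p q,
        Complex.exp (F x) * (v₁ x * deriv v₂ x - deriv v₁ x * v₂ x) = h x * C) := by
  have htransform (x : ℝ) (hx : x ∈ Ioo p q) : wronskian v₁ v₂ x = h x * wronskian w₁ w₂ x := by
    rw [funext hv₁, funext hv₂, hh]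
    exact wronskian_transform_of_ode (hw₁ x hx) (hw₁' x hx) (hw₂ x hx) (hw₂' x hx) (ht₁ x hx)
      (ht₂ x hx) (heq₁ x hx) (heq₂ x hx)
  have hexp_wronskian (x : ℝ) (hx : x ∈ Ioo p q) :
      HasDerivAt (fun y ↦ Complex.exp (F y) * wronskian w₁ w₂ y) 0 x :=
    hasDerivAt_cexp_mul_eq_zero (hF x hx) <| hasDerivAt_wronskian_of_ode (hw₁ x hx) (hw₁' x hx)
      (hw₂ x hx) (hw₂' x hx) (heq₁ x hx) (heq₂ x hx)
  obtain ⟨C, hC⟩ := isOpen_Ioo.exists_is_const_of_deriv_eq_zero isPreconnected_Ioo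
    (fun x hx ↦ (hexp_wronskian x hx).differentiableAt.differentiableWithinAt)
    (fun x hx ↦ (hexp_wronskian x hx).deriv)
  refine ⟨htransform, C, hC, fun x hx ↦ ?_⟩
  change Complex.exp (F x) * wronskian v₁ v₂ x = h x * C
  rw [htransform x hx, ← hC x hx]
  ring

/-- Invariance of the Wronskian constant under the change of dependent variable
`v = t₁ w + t₂ w′`. -/
theorem wronskian_invariance_dependent_variable
    (p q : ℝ) (f g F w₁ w₂ t₁ t₂ : ℝ → ℂ)
    (hf : ContinuousOn f (Ioo p q)) (hg : ContinuousOn g (Ioo p q))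
    (hF : ∀ x ∈ Ioo p q, HasDerivAt F (f x) x)
    (hw₁ : ∀ x ∈ Ioo p q, DifferentiableAt ℝ w₁ x)
    (hw₁' : ∀ x ∈ Ioo p q, DifferentiableAt ℝ (deriv w₁) x)
    (hw₂ : ∀ x ∈ Ioo p q, DifferentiableAt ℝ w₂ x)
    (hw₂' : ∀ x ∈ Ioo p q, DifferentiableAt ℝ (deriv w₂) x)
    (heq₁ : ∀ x ∈ Ioo p q, deriv (deriv w₁) x + f x * deriv w₁ x + g x * w₁ x = 0)
    (heq₂ : ∀ x ∈ Ioo p q, deriv (deriv w₂) x + f x * deriv w₂ x + g x * w₂ x = 0)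
    (ht₁ : ∀ x ∈ Ioo p q, DifferentiableAt ℝ t₁ x)
    (ht₂ : ∀ x ∈ Ioo p q, DifferentiableAt ℝ t₂ x)
    (v₁ v₂ h : ℝ → ℂ)
    (hv₁ : ∀ x, v₁ x = t₁ x * w₁ x + t₂ x * deriv w₁ x)
    (hv₂ : ∀ x, v₂ x = t₁ x * w₂ x + t₂ x * deriv w₂ x)
    (hh : ∀ x, h x = t₁ x * (deriv t₂ x - f x * t₂ x)
      + t₂ x * (g x * t₂ x - deriv t₁ x) + t₁ x ^ 2) :
    (∀ x ∈ Ioo p q,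
      v₁ x * deriv v₂ x - deriv v₁ x * v₂ x
        = h x * (w₁ x * deriv w₂ x - deriv w₁ x * w₂ x)) ∧
    ∃ C : ℂ,
      (∀ x ∈ Ioo p q,
        Complex.exp (F x) * (w₁ x * deriv w₂ x - deriv w₁ x * w₂ x) = C) ∧
      (∀ x ∈ Ioo p q,
        Complex.exp (F x) * (v₁ x * deriv v₂ x - deriv v₁ x * v₂ x) = h x * C) :=
  wronskian_invariance_dependent_variable_general p q f g F w₁ w₂ t₁ t₂ hF hw₁ hw₁' hw₂ hw₂' heq₁
    heq₂ ht₁ ht₂ v₁ v₂ h hv₁ hv₂ hh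
end

section
/- (Seven-term recurrence for the derivatives of radial Teukolsky solutions.) Let U ⊆ ℝ be an open set on which Δ(r) ≠ 0, let r₀ ∈ U, and let R : U → ℂ be infinitely differentiable and satisfy the homogeneous radial Teukolsky equation on U. Write W(r) = Δ(r)V(r) = λΔ(r) − 4isωrΔ(r) − K(r)² + 2is(r−1)K(r), a polynomial in r, and Δ₀ = Δ(r₀). Then for every integer n ≥ 4: Δ₀² R^{(n+2)}(r₀) + 2Δ₀(r₀−1)(2n+s+1) R^{(n+1)}(r₀) + [2n(a²+3r₀²−6r₀+2)(n+s) − W(r₀)] R^{(n)}(r₀) + [2n(n−1)(r₀−1)(2n+3s−1) − n·W′(r₀)] R^{(n−1)}(r₀) + n(n−1)[(n−2)(n+2s−1) − W″(r₀)/2] R^{(n−2)}(r₀) + 2ωn(n−1)(n−2)(2r₀ω+is) R^{(n−3)}(r₀) + ω²n(n−1)(n−2)(n−3) R^{(n−4)}(r₀) = 0, where R^{(k)} denotes the k-th derivative of R. -/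
open Set Complex

section RTauxSection
open Finset



/-- A generic quartic polynomial function `ℝ → ℂ` (via `Complex.ofReal`). -/
noncomputable def Q4 (c0 c1 c2 c3 c4 : ℂ) : ℝ → ℂ :=
  fun r => c4 * (r : ℂ) ^ 4 + c3 * (r : ℂ) ^ 3 + c2 * (r : ℂ) ^ 2 + c1 * (r : ℂ) + c0

lemma hasDerivAt_Q4 (c0 c1 c2 c3 c4 : ℂ) (x : ℝ) :
    HasDerivAt (Q4 c0 c1 c2 c3 c4) (Q4 c1 (2 * c2) (3 * c3) (4 * c4) 0 x) x := by
  have h4 := (hasDerivAt_pow 4 (x:ℂ)).const_mul c4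
  have h3 := (hasDerivAt_pow 3 (x:ℂ)).const_mul c3
  have h2 := (hasDerivAt_pow 2 (x:ℂ)).const_mul c2
  have h1 := (hasDerivAt_pow 1 (x:ℂ)).const_mul c1
  have h0 := hasDerivAt_const ((x:ℝ):ℂ) c0
  have h : HasDerivAt (fun z : ℂ => c4 * z ^ 4 + c3 * z ^ 3 + c2 * z ^ 2 + c1 * z ^ 1 + c0)
      (Q4 c1 (2 * c2) (3 * c3) (4 * c4) 0 x) ((x:ℝ):ℂ) := by
    refine HasDerivAt.congr_deriv ((((h4.add h3).add h2).add h1).add h0) ?_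
    simp [Q4]; push_cast; ring
  have h' := h.comp_ofReal
  refine h'.congr_of_eventuallyEq (Filter.Eventually.of_forall fun y => ?_)
  simp [Q4]

lemma deriv_Q4 (c0 c1 c2 c3 c4 : ℂ) :
    deriv (Q4 c0 c1 c2 c3 c4) = Q4 c1 (2 * c2) (3 * c3) (4 * c4) 0 :=
  funext fun x => (hasDerivAt_Q4 c0 c1 c2 c3 c4 x).deriv

lemma contDiff_Q4 (c0 c1 c2 c3 c4 : ℂ) : ContDiff ℝ (⊤ : ℕ∞) (Q4 c0 c1 c2 c3 c4) := by
  have h : ContDiff ℝ (⊤ : ℕ∞) (fun r : ℝ => (r:ℂ)) := Complex.ofRealCLM.contDiff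
  exact ((((contDiff_const.mul (h.pow 4)).add (contDiff_const.mul (h.pow 3))).add
    (contDiff_const.mul (h.pow 2))).add (contDiff_const.mul h)).add contDiff_const

lemma itQ4_one (c0 c1 c2 c3 c4 : ℂ) :
    iteratedDeriv 1 (Q4 c0 c1 c2 c3 c4) = Q4 c1 (2 * c2) (3 * c3) (4 * c4) 0 := by
  rw [iteratedDeriv_one, deriv_Q4]

lemma Q4_congr {c0 c1 c2 c3 c4 d0 d1 d2 d3 d4 : ℂ} (h0 : c0 = d0) (h1 : c1 = d1)
    (h2 : c2 = d2) (h3 : c3 = d3) (h4 : c4 = d4) :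
    Q4 c0 c1 c2 c3 c4 = Q4 d0 d1 d2 d3 d4 := by
  subst h0 h1 h2 h3 h4; rfl

lemma itQ4_two (c0 c1 c2 c3 c4 : ℂ) :
    iteratedDeriv 2 (Q4 c0 c1 c2 c3 c4) = Q4 (2 * c2) (6 * c3) (12 * c4) 0 0 := by
  rw [show (2:ℕ) = 1 + 1 from rfl, iteratedDeriv_succ', deriv_Q4, itQ4_one]
  exact Q4_congr (by ring) (by ring) (by ring) (by ring) (by ring)

lemma itQ4_three (c0 c1 c2 c3 c4 : ℂ) :
    iteratedDeriv 3 (Q4 c0 c1 c2 c3 c4) = Q4 (6 * c3) (24 * c4) 0 0 0 := by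
  rw [show (3:ℕ) = 2 + 1 from rfl, iteratedDeriv_succ', deriv_Q4, itQ4_two]
  exact Q4_congr (by ring) (by ring) (by ring) (by ring) (by ring)

lemma itQ4_four (c0 c1 c2 c3 c4 : ℂ) :
    iteratedDeriv 4 (Q4 c0 c1 c2 c3 c4) = Q4 (24 * c4) 0 0 0 0 := by
  rw [show (4:ℕ) = 3 + 1 from rfl, iteratedDeriv_succ', deriv_Q4, itQ4_three]
  exact Q4_congr (by ring) (by ring) (by ring) (by ring) (by ring)

lemma iteratedDeriv_zero_fun : ∀ (j : ℕ) (x : ℝ),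
    iteratedDeriv j (fun _ : ℝ => (0 : ℂ)) x = 0 := by
  intro j
  induction j with
  | zero => intro x; simp
  | succ j ih =>
    intro x
    rw [iteratedDeriv_succ']
    simpa using ih x

lemma itQ4_of_ge (c0 c1 c2 c3 c4 : ℂ) {k : ℕ} (hk : 5 ≤ k) (x : ℝ) :
    iteratedDeriv k (Q4 c0 c1 c2 c3 c4) x = 0 := by
  obtain ⟨j, rfl⟩ : ∃ j, k = j + 5 := ⟨k - 5, by omega⟩
  rw [show j + 5 = (j + 4) + 1 from rfl, iteratedDeriv_succ', deriv_Q4,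
    show j + 4 = (j + 3) + 1 from rfl, iteratedDeriv_succ', deriv_Q4,
    show j + 3 = (j + 2) + 1 from rfl, iteratedDeriv_succ', deriv_Q4,
    show j + 2 = (j + 1) + 1 from rfl, iteratedDeriv_succ', deriv_Q4,
    iteratedDeriv_succ', deriv_Q4]
  rw [show Q4 (2*(3*(4*(0:ℂ)))) (2*(3*(4*0))) (3*(4*0)) (4*0) 0
      = fun _ : ℝ => (0:ℂ) from funext fun y => by simp [Q4]]
  exact iteratedDeriv_zero_fun j x



lemma contDiffOn_iteratedDeriv {U : Set ℝ} (hU : IsOpen U) {g : ℝ → ℂ}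
    (hg : ContDiffOn ℝ (⊤ : ℕ∞) g U) (k : ℕ) : ContDiffOn ℝ (⊤ : ℕ∞) (iteratedDeriv k g) U := by
  induction k with
  | zero => simpa [iteratedDeriv_zero] using hg
  | succ k ih => rw [iteratedDeriv_succ]; exact ih.deriv_of_isOpen hU (by simp)

lemma differentiableAt_iteratedDeriv_of_mem {U : Set ℝ} (hU : IsOpen U) {g : ℝ → ℂ}
    (hg : ContDiffOn ℝ (⊤ : ℕ∞) g U) (k : ℕ) {x : ℝ} (hx : x ∈ U) :
    DifferentiableAt ℝ (iteratedDeriv k g) x :=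
  ((contDiffOn_iteratedDeriv hU hg k).differentiableOn (by simp) x hx).differentiableAt
    (hU.mem_nhds hx)

lemma iteratedDeriv_zero_on {U : Set ℝ} (hU : IsOpen U) :
    ∀ (f : ℝ → ℂ), (∀ y ∈ U, f y = 0) → ∀ (k : ℕ), ∀ x ∈ U, iteratedDeriv k f x = 0 := by
  intro f hf k
  induction k generalizing f with
  | zero => intro x hx; simpa [iteratedDeriv_zero] using hf x hx
  | succ k ih =>
    intro x hx
    rw [iteratedDeriv_succ']
    refine ih (deriv f) (fun y hy => ?_) x hx
    have hev : f =ᶠ[nhds y] (fun _ => (0:ℂ)) :=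
      Filter.eventuallyEq_of_mem (hU.mem_nhds hy) (fun z hz => hf z hz)
    rw [hev.deriv_eq]; simp

lemma iteratedDeriv_add_on {U : Set ℝ} (hU : IsOpen U) {f g : ℝ → ℂ}
    (hf : ContDiffOn ℝ (⊤ : ℕ∞) f U) (hg : ContDiffOn ℝ (⊤ : ℕ∞) g U) (k : ℕ) :
    ∀ x ∈ U, iteratedDeriv k (fun y => f y + g y) x
      = iteratedDeriv k f x + iteratedDeriv k g x := by
  induction k with
  | zero => intro x hx; simp [iteratedDeriv_zero]
  | succ k ih =>
    intro x hx
    rw [iteratedDeriv_succ]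
    have hev : iteratedDeriv k (fun y => f y + g y)
        =ᶠ[nhds x] (fun y => iteratedDeriv k f y + iteratedDeriv k g y) :=
      Filter.eventuallyEq_of_mem (hU.mem_nhds hx) (fun z hz => ih z hz)
    rw [hev.deriv_eq, deriv_fun_add (differentiableAt_iteratedDeriv_of_mem hU hf k hx)
      (differentiableAt_iteratedDeriv_of_mem hU hg k hx), ← iteratedDeriv_succ,
      ← iteratedDeriv_succ]

lemma iteratedDeriv_sub_on {U : Set ℝ} (hU : IsOpen U) {f g : ℝ → ℂ}
    (hf : ContDiffOn ℝ (⊤ : ℕ∞) f U) (hg : ContDiffOn ℝ (⊤ : ℕ∞) g U) (k : ℕ) :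
    ∀ x ∈ U, iteratedDeriv k (fun y => f y - g y) x
      = iteratedDeriv k f x - iteratedDeriv k g x := by
  induction k with
  | zero => intro x hx; simp [iteratedDeriv_zero]
  | succ k ih =>
    intro x hx
    rw [iteratedDeriv_succ]
    have hev : iteratedDeriv k (fun y => f y - g y)
        =ᶠ[nhds x] (fun y => iteratedDeriv k f y - iteratedDeriv k g y) :=
      Filter.eventuallyEq_of_mem (hU.mem_nhds hx) (fun z hz => ih z hz)
    rw [hev.deriv_eq, deriv_fun_sub (differentiableAt_iteratedDeriv_of_mem hU hf k hx)
      (differentiableAt_iteratedDeriv_of_mem hU hg k hx), ← iteratedDeriv_succ,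
      ← iteratedDeriv_succ]

/-- Leibniz rule for iterated derivatives on an open set, with the first factor
globally smooth. -/
lemma leibniz_on {U : Set ℝ} (hU : IsOpen U) {f g : ℝ → ℂ}
    (hf : ContDiff ℝ (⊤ : ℕ∞) f) (hg : ContDiffOn ℝ (⊤ : ℕ∞) g U) (n : ℕ) :
    ∀ x ∈ U, iteratedDeriv n (fun y => f y * g y) x =
      ∑ k ∈ Finset.range (n + 1),
        ((n.choose k : ℕ) : ℂ) * iteratedDeriv k f x * iteratedDeriv (n - k) g x := by
  induction n with
  | zero => intro x hx; simp [iteratedDeriv_zero]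
  | succ n ih =>
    intro x hx
    have hfd : ∀ (k : ℕ) (y : ℝ), DifferentiableAt ℝ (iteratedDeriv k f) y := fun k y =>
      (hf.differentiable_iteratedDeriv k (by exact_mod_cast ENat.coe_lt_top k)).differentiableAt
    have hgd : ∀ (k : ℕ), DifferentiableAt ℝ (iteratedDeriv k g) x := fun k =>
      differentiableAt_iteratedDeriv_of_mem hU hg k hx
    rw [iteratedDeriv_succ]
    have hev : iteratedDeriv n (fun y => f y * g y) =ᶠ[nhds x]
        (fun y => ∑ k ∈ Finset.range (n + 1),
          ((n.choose k : ℕ) : ℂ) * iteratedDeriv k f y * iteratedDeriv (n - k) g y) :=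
      Filter.eventuallyEq_of_mem (hU.mem_nhds hx) (fun z hz => ih z hz)
    rw [hev.deriv_eq]
    rw [deriv_fun_sum (A := fun k y => ((n.choose k : ℕ) : ℂ) * iteratedDeriv k f y * iteratedDeriv (n - k) g y) (fun k _ => (((differentiableAt_const _).mul (hfd k x)).mul (hgd (n - k))))]
    have hterm : ∀ k ∈ Finset.range (n + 1),
        deriv (fun y => ((n.choose k : ℕ) : ℂ) * iteratedDeriv k f y
            * iteratedDeriv (n - k) g y) x
          = ((n.choose k : ℕ) : ℂ) * iteratedDeriv (k+1) f x * iteratedDeriv (n - k) g x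
            + ((n.choose k : ℕ) : ℂ) * iteratedDeriv k f x
              * iteratedDeriv (n + 1 - k) g x := by
      intro k hk
      have hk' : k ≤ n := by simpa [Nat.lt_succ_iff] using hk
      rw [deriv_fun_mul (c := fun y => ((n.choose k : ℕ) : ℂ) * iteratedDeriv k f y) ((differentiableAt_const _).mul (hfd k x)) (hgd (n - k)),
        deriv_const_mul _ (hfd k x), ← iteratedDeriv_succ, ← iteratedDeriv_succ]
      have : n - k + 1 = n + 1 - k := by omega
      rw [this]
    rw [Finset.sum_congr rfl hterm, Finset.sum_add_distrib]
    have h2 : ∑ k ∈ Finset.range (n + 1), ((n.choose k : ℕ) : ℂ) * iteratedDeriv k f x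
          * iteratedDeriv (n + 1 - k) g x
        = ∑ k ∈ Finset.range (n + 1), ((n.choose (k+1) : ℕ) : ℂ) * iteratedDeriv (k+1) f x
            * iteratedDeriv (n - k) g x
          + iteratedDeriv 0 f x * iteratedDeriv (n + 1) g x := by
      rw [Finset.sum_range_succ' (fun k => ((n.choose k : ℕ) : ℂ) * iteratedDeriv k f x
        * iteratedDeriv (n + 1 - k) g x) n]
      rw [Finset.sum_range_succ (fun k => ((n.choose (k+1) : ℕ) : ℂ) * iteratedDeriv (k+1) f x
        * iteratedDeriv (n - k) g x) n]
      simp only [Nat.choose_succ_self, Nat.cast_zero, zero_mul, add_zero, Nat.choose_zero_right,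
        Nat.cast_one, one_mul, Nat.sub_zero]
      congr 1
      refine Finset.sum_congr rfl (fun k hk => ?_)
      have hk' : k < n := Finset.mem_range.mp hk
      have hnk : n + 1 - (k + 1) = n - k := by omega
      rw [hnk]
    rw [h2]
    conv_rhs => rw [Finset.sum_range_succ' (fun k => (((n+1).choose k : ℕ) : ℂ)
      * iteratedDeriv k f x * iteratedDeriv (n + 1 - k) g x) (n+1)]
    have h3 : ∀ k ∈ Finset.range (n+1),
        (((n+1).choose (k+1) : ℕ) : ℂ) * iteratedDeriv (k+1) f x
            * iteratedDeriv (n+1-(k+1)) g x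
          = ((n.choose k : ℕ) : ℂ) * iteratedDeriv (k+1) f x * iteratedDeriv (n-k) g x
            + ((n.choose (k+1) : ℕ) : ℂ) * iteratedDeriv (k+1) f x
              * iteratedDeriv (n-k) g x := by
      intro k hk
      have hnk : n + 1 - (k+1) = n - k := by omega
      rw [hnk, Nat.choose_succ_succ]
      push_cast; ring
    rw [Finset.sum_congr rfl h3, Finset.sum_add_distrib]
    simp only [Nat.choose_zero_right, Nat.cast_one, one_mul, Nat.sub_zero]
    ring



lemma choose2_nat (j : ℕ) : (j+4).choose 2 * 2 = (j+4) * (j+3) := by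
  induction j with
  | zero => decide
  | succ j ih =>
    have h1 : (j+5).choose 2 = (j+4).choose 1 + (j+4).choose 2 := Nat.choose_succ_succ (j+4) 1
    rw [show j+1+4 = j+5 from rfl, h1, Nat.choose_one_right]
    zify at ih ⊢
    linear_combination ih

lemma choose3_nat (j : ℕ) : (j+4).choose 3 * 6 = (j+4) * (j+3) * (j+2) := by
  induction j with
  | zero => decide
  | succ j ih =>
    have h1 : (j+5).choose 3 = (j+4).choose 2 + (j+4).choose 3 := Nat.choose_succ_succ (j+4) 2
    have h2 := choose2_nat j
    rw [show j+1+4 = j+5 from rfl, h1]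
    zify at ih h2 ⊢
    linear_combination 3 * h2 + ih

lemma choose4_nat (j : ℕ) : (j+4).choose 4 * 24 = (j+4) * (j+3) * (j+2) * (j+1) := by
  induction j with
  | zero => decide
  | succ j ih =>
    have h1 : (j+5).choose 4 = (j+4).choose 3 + (j+4).choose 4 := Nat.choose_succ_succ (j+4) 3
    have h2 := choose3_nat j
    rw [show j+1+4 = j+5 from rfl, h1]
    zify at ih h2 ⊢
    linear_combination 4 * h2 + ih

lemma choose2_c (j : ℕ) : (((j+4).choose 2 : ℕ) : ℂ) = ((j:ℂ)+4) * ((j:ℂ)+3) / 2 := by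
  have := choose2_nat j
  field_simp
  exact_mod_cast congrArg (Nat.cast : ℕ → ℂ) this

lemma choose3_c (j : ℕ) : (((j+4).choose 3 : ℕ) : ℂ) = ((j:ℂ)+4) * ((j:ℂ)+3) * ((j:ℂ)+2) / 6 := by
  have := choose3_nat j
  field_simp
  exact_mod_cast congrArg (Nat.cast : ℕ → ℂ) this

lemma choose4_c (j : ℕ) :
    (((j+4).choose 4 : ℕ) : ℂ) = ((j:ℂ)+4) * ((j:ℂ)+3) * ((j:ℂ)+2) * ((j:ℂ)+1) / 24 := by
  have := choose4_nat j
  field_simp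
  exact_mod_cast congrArg (Nat.cast : ℕ → ℂ) this


end RTauxSection

/-- `Δ(r) = r² − 2r + a²`. -/
noncomputable def Δfun (a : ℝ) (r : ℝ) : ℝ := r ^ 2 - 2 * r + a ^ 2

/-- `K(r) = (r² + a²)ω − m·a`. -/
noncomputable def Kfun (a : ℝ) (m : ℤ) (ω : ℂ) (r : ℝ) : ℂ :=
  ((r : ℂ) ^ 2 + (a : ℂ) ^ 2) * ω - (m : ℂ) * (a : ℂ)

/-- `V(r) = λ − 4isωr − (K² − 2is(r−1)K)/Δ`. -/
noncomputable def Vfun (a : ℝ) (s m : ℤ) (ω lam : ℂ) (r : ℝ) : ℂ :=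
  lam - 4 * I * (s : ℂ) * ω * (r : ℂ)
    - ((Kfun a m ω r) ^ 2 - 2 * I * (s : ℂ) * ((r : ℂ) - 1) * Kfun a m ω r)
      / ((Δfun a r : ℝ) : ℂ)

/-- `W(r) = Δ(r)V(r) = λΔ − 4isωrΔ − K² + 2is(r−1)K`, a polynomial in `r`. -/
noncomputable def Wfun (a : ℝ) (s m : ℤ) (ω lam : ℂ) (r : ℝ) : ℂ :=
  lam * ((Δfun a r : ℝ) : ℂ) - 4 * I * (s : ℂ) * ω * (r : ℂ) * ((Δfun a r : ℝ) : ℂ)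
    - (Kfun a m ω r) ^ 2 + 2 * I * (s : ℂ) * ((r : ℂ) - 1) * Kfun a m ω r

/-- Seven-term recurrence for the derivatives of solutions of the homogeneous radial
Teukolsky equation. -/
theorem radial_teukolsky_derivative_recurrence
    (a : ℝ) (ha : |a| < 1) (s m : ℤ) (ω lam : ℂ) (hω : ω ≠ 0)
    (U : Set ℝ) (hU : IsOpen U) (hΔ : ∀ r ∈ U, Δfun a r ≠ 0)
    (r₀ : ℝ) (hr₀ : r₀ ∈ U)
    (R : ℝ → ℂ) (hR : ContDiffOn ℝ (⊤ : ℕ∞) R U)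
    (heq : ∀ r ∈ U,
      ((Δfun a r : ℝ) : ℂ) * deriv (deriv R) r
        + 2 * ((s : ℂ) + 1) * ((r : ℂ) - 1) * deriv R r
        - Vfun a s m ω lam r * R r = 0) :
    ∀ n : ℕ, 4 ≤ n →
      ((Δfun a r₀ : ℝ) : ℂ) ^ 2 * iteratedDeriv (n + 2) R r₀
      + 2 * ((Δfun a r₀ : ℝ) : ℂ) * ((r₀ : ℂ) - 1) * (2 * (n : ℂ) + (s : ℂ) + 1)
          * iteratedDeriv (n + 1) R r₀
      + (2 * (n : ℂ) * ((a : ℂ) ^ 2 + 3 * (r₀ : ℂ) ^ 2 - 6 * (r₀ : ℂ) + 2) * ((n : ℂ) + (s : ℂ))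
          - Wfun a s m ω lam r₀) * iteratedDeriv n R r₀
      + (2 * (n : ℂ) * ((n : ℂ) - 1) * ((r₀ : ℂ) - 1) * (2 * (n : ℂ) + 3 * (s : ℂ) - 1)
          - (n : ℂ) * deriv (Wfun a s m ω lam) r₀) * iteratedDeriv (n - 1) R r₀
      + (n : ℂ) * ((n : ℂ) - 1) * (((n : ℂ) - 2) * ((n : ℂ) + 2 * (s : ℂ) - 1)
          - deriv (deriv (Wfun a s m ω lam)) r₀ / 2) * iteratedDeriv (n - 2) R r₀
      + 2 * ω * (n : ℂ) * ((n : ℂ) - 1) * ((n : ℂ) - 2) * (2 * (r₀ : ℂ) * ω + I * (s : ℂ))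
          * iteratedDeriv (n - 3) R r₀
      + ω ^ 2 * (n : ℂ) * ((n : ℂ) - 1) * ((n : ℂ) - 2) * ((n : ℂ) - 3)
          * iteratedDeriv (n - 4) R r₀ = 0 := by
  intro n hn
  obtain ⟨j, rfl⟩ : ∃ j, n = j + 4 := ⟨n - 4, by omega⟩
  -- coefficient polynomials
  have hPeq : (fun r : ℝ => ((Δfun a r : ℝ) : ℂ) ^ 2)
      = Q4 ((a:ℂ)^4) (-4*(a:ℂ)^2) (4+2*(a:ℂ)^2) (-4) 1 := by
    funext r; simp only [Δfun, Q4]; push_cast; ring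
  have hQeq : (fun r : ℝ => 2*((s:ℂ)+1)*((r:ℂ)-1)*((Δfun a r : ℝ) : ℂ))
      = Q4 (-2*((s:ℂ)+1)*(a:ℂ)^2) (2*((s:ℂ)+1)*(2+(a:ℂ)^2)) (-6*((s:ℂ)+1)) (2*((s:ℂ)+1)) 0 := by
    funext r; simp only [Δfun, Q4]; push_cast; ring
  have hWeq : Wfun a s m ω lam
      = Q4 (lam*(a:ℂ)^2 - ((a:ℂ)^2*ω - (m:ℂ)*(a:ℂ))^2 - 2*I*(s:ℂ)*((a:ℂ)^2*ω - (m:ℂ)*(a:ℂ)))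
          (-2*lam - 4*I*(s:ℂ)*ω*(a:ℂ)^2 + 2*I*(s:ℂ)*((a:ℂ)^2*ω - (m:ℂ)*(a:ℂ)))
          (lam + 6*I*(s:ℂ)*ω - 2*ω*((a:ℂ)^2*ω - (m:ℂ)*(a:ℂ)))
          (-2*I*(s:ℂ)*ω) (-ω^2) := by
    funext r; simp only [Wfun, Kfun, Δfun, Q4]; push_cast; ring
  have hd1 : ContDiffOn ℝ (⊤ : ℕ∞) (deriv R) U := hR.deriv_of_isOpen hU (by simp)
  have hd2 : ContDiffOn ℝ (⊤ : ℕ∞) (deriv (deriv R)) U := hd1.deriv_of_isOpen hU (by simp)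
  -- the Teukolsky equation multiplied through by Δ
  have hG : ∀ y ∈ U,
      Q4 ((a:ℂ)^4) (-4*(a:ℂ)^2) (4+2*(a:ℂ)^2) (-4) 1 y * deriv (deriv R) y
        + Q4 (-2*((s:ℂ)+1)*(a:ℂ)^2) (2*((s:ℂ)+1)*(2+(a:ℂ)^2)) (-6*((s:ℂ)+1)) (2*((s:ℂ)+1)) 0 y
            * deriv R y
        - Q4 (lam*(a:ℂ)^2 - ((a:ℂ)^2*ω - (m:ℂ)*(a:ℂ))^2 - 2*I*(s:ℂ)*((a:ℂ)^2*ω - (m:ℂ)*(a:ℂ)))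
            (-2*lam - 4*I*(s:ℂ)*ω*(a:ℂ)^2 + 2*I*(s:ℂ)*((a:ℂ)^2*ω - (m:ℂ)*(a:ℂ)))
            (lam + 6*I*(s:ℂ)*ω - 2*ω*((a:ℂ)^2*ω - (m:ℂ)*(a:ℂ)))
            (-2*I*(s:ℂ)*ω) (-ω^2) y * R y = 0 := by
    intro y hy
    have h1 := heq y hy
    have hΔy : ((Δfun a y : ℝ) : ℂ) ≠ 0 := Complex.ofReal_ne_zero.mpr (hΔ y hy)
    have hWV : ((Δfun a y : ℝ) : ℂ) * Vfun a s m ω lam y = Wfun a s m ω lam y := by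
      simp only [Vfun, Wfun]
      field_simp
      ring
    rw [hWeq] at hWV
    simp only [Δfun, Q4] at h1 hWV hΔy ⊢
    push_cast at h1 hWV ⊢
    linear_combination ((y:ℂ)^2 - 2*(y:ℂ) + (a:ℂ)^2) * h1 + R y * hWV
  have hfP : ContDiff ℝ (⊤ : ℕ∞) (Q4 ((a:ℂ)^4) (-4*(a:ℂ)^2) (4+2*(a:ℂ)^2) (-4) 1) := contDiff_Q4 _ _ _ _ _
  have hfQ : ContDiff ℝ (⊤ : ℕ∞) (Q4 (-2*((s:ℂ)+1)*(a:ℂ)^2) (2*((s:ℂ)+1)*(2+(a:ℂ)^2)) (-6*((s:ℂ)+1)) (2*((s:ℂ)+1)) 0) := contDiff_Q4 _ _ _ _ _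
  have hfW : ContDiff ℝ (⊤ : ℕ∞) (Q4 (lam*(a:ℂ)^2 - ((a:ℂ)^2*ω - (m:ℂ)*(a:ℂ))^2 - 2*I*(s:ℂ)*((a:ℂ)^2*ω - (m:ℂ)*(a:ℂ)))
      (-2*lam - 4*I*(s:ℂ)*ω*(a:ℂ)^2 + 2*I*(s:ℂ)*((a:ℂ)^2*ω - (m:ℂ)*(a:ℂ)))
      (lam + 6*I*(s:ℂ)*ω - 2*ω*((a:ℂ)^2*ω - (m:ℂ)*(a:ℂ)))
      (-2*I*(s:ℂ)*ω) (-ω^2)) := contDiff_Q4 _ _ _ _ _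
  have hc1 : ContDiffOn ℝ (⊤ : ℕ∞) (fun y => (Q4 ((a:ℂ)^4) (-4*(a:ℂ)^2) (4+2*(a:ℂ)^2) (-4) 1) y * deriv (deriv R) y) U :=
    hfP.contDiffOn.mul hd2
  have hc2 : ContDiffOn ℝ (⊤ : ℕ∞) (fun y => (Q4 (-2*((s:ℂ)+1)*(a:ℂ)^2) (2*((s:ℂ)+1)*(2+(a:ℂ)^2)) (-6*((s:ℂ)+1)) (2*((s:ℂ)+1)) 0) y * deriv R y) U :=
    hfQ.contDiffOn.mul hd1
  have hc3 : ContDiffOn ℝ (⊤ : ℕ∞) (fun y => (Q4 (lam*(a:ℂ)^2 - ((a:ℂ)^2*ω - (m:ℂ)*(a:ℂ))^2 - 2*I*(s:ℂ)*((a:ℂ)^2*ω - (m:ℂ)*(a:ℂ)))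
      (-2*lam - 4*I*(s:ℂ)*ω*(a:ℂ)^2 + 2*I*(s:ℂ)*((a:ℂ)^2*ω - (m:ℂ)*(a:ℂ)))
      (lam + 6*I*(s:ℂ)*ω - 2*ω*((a:ℂ)^2*ω - (m:ℂ)*(a:ℂ)))
      (-2*I*(s:ℂ)*ω) (-ω^2)) y * R y) U :=
    hfW.contDiffOn.mul hR
  have E0 : iteratedDeriv (j+4) (fun y => (Q4 ((a:ℂ)^4) (-4*(a:ℂ)^2) (4+2*(a:ℂ)^2) (-4) 1) y * deriv (deriv R) y
      + (Q4 (-2*((s:ℂ)+1)*(a:ℂ)^2) (2*((s:ℂ)+1)*(2+(a:ℂ)^2)) (-6*((s:ℂ)+1)) (2*((s:ℂ)+1)) 0) y * deriv R y - (Q4 (lam*(a:ℂ)^2 - ((a:ℂ)^2*ω - (m:ℂ)*(a:ℂ))^2 - 2*I*(s:ℂ)*((a:ℂ)^2*ω - (m:ℂ)*(a:ℂ)))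
      (-2*lam - 4*I*(s:ℂ)*ω*(a:ℂ)^2 + 2*I*(s:ℂ)*((a:ℂ)^2*ω - (m:ℂ)*(a:ℂ)))
      (lam + 6*I*(s:ℂ)*ω - 2*ω*((a:ℂ)^2*ω - (m:ℂ)*(a:ℂ)))
      (-2*I*(s:ℂ)*ω) (-ω^2)) y * R y) r₀ = 0 :=
    iteratedDeriv_zero_on hU _ hG (j+4) r₀ hr₀
  have E1 : iteratedDeriv (j+4) (fun y => (Q4 ((a:ℂ)^4) (-4*(a:ℂ)^2) (4+2*(a:ℂ)^2) (-4) 1) y * deriv (deriv R) y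
        + (Q4 (-2*((s:ℂ)+1)*(a:ℂ)^2) (2*((s:ℂ)+1)*(2+(a:ℂ)^2)) (-6*((s:ℂ)+1)) (2*((s:ℂ)+1)) 0) y * deriv R y - (Q4 (lam*(a:ℂ)^2 - ((a:ℂ)^2*ω - (m:ℂ)*(a:ℂ))^2 - 2*I*(s:ℂ)*((a:ℂ)^2*ω - (m:ℂ)*(a:ℂ)))
      (-2*lam - 4*I*(s:ℂ)*ω*(a:ℂ)^2 + 2*I*(s:ℂ)*((a:ℂ)^2*ω - (m:ℂ)*(a:ℂ)))
      (lam + 6*I*(s:ℂ)*ω - 2*ω*((a:ℂ)^2*ω - (m:ℂ)*(a:ℂ)))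
      (-2*I*(s:ℂ)*ω) (-ω^2)) y * R y) r₀
      = iteratedDeriv (j+4) (fun y => (Q4 ((a:ℂ)^4) (-4*(a:ℂ)^2) (4+2*(a:ℂ)^2) (-4) 1) y * deriv (deriv R) y
          + (Q4 (-2*((s:ℂ)+1)*(a:ℂ)^2) (2*((s:ℂ)+1)*(2+(a:ℂ)^2)) (-6*((s:ℂ)+1)) (2*((s:ℂ)+1)) 0) y * deriv R y) r₀
        - iteratedDeriv (j+4) (fun y => (Q4 (lam*(a:ℂ)^2 - ((a:ℂ)^2*ω - (m:ℂ)*(a:ℂ))^2 - 2*I*(s:ℂ)*((a:ℂ)^2*ω - (m:ℂ)*(a:ℂ)))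
      (-2*lam - 4*I*(s:ℂ)*ω*(a:ℂ)^2 + 2*I*(s:ℂ)*((a:ℂ)^2*ω - (m:ℂ)*(a:ℂ)))
      (lam + 6*I*(s:ℂ)*ω - 2*ω*((a:ℂ)^2*ω - (m:ℂ)*(a:ℂ)))
      (-2*I*(s:ℂ)*ω) (-ω^2)) y * R y) r₀ :=
    iteratedDeriv_sub_on hU (hc1.add hc2) hc3 (j+4) r₀ hr₀
  have E2 : iteratedDeriv (j+4) (fun y => (Q4 ((a:ℂ)^4) (-4*(a:ℂ)^2) (4+2*(a:ℂ)^2) (-4) 1) y * deriv (deriv R) y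
        + (Q4 (-2*((s:ℂ)+1)*(a:ℂ)^2) (2*((s:ℂ)+1)*(2+(a:ℂ)^2)) (-6*((s:ℂ)+1)) (2*((s:ℂ)+1)) 0) y * deriv R y) r₀
      = iteratedDeriv (j+4) (fun y => (Q4 ((a:ℂ)^4) (-4*(a:ℂ)^2) (4+2*(a:ℂ)^2) (-4) 1) y * deriv (deriv R) y) r₀
        + iteratedDeriv (j+4) (fun y => (Q4 (-2*((s:ℂ)+1)*(a:ℂ)^2) (2*((s:ℂ)+1)*(2+(a:ℂ)^2)) (-6*((s:ℂ)+1)) (2*((s:ℂ)+1)) 0) y * deriv R y) r₀ :=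
    iteratedDeriv_add_on hU hc1 hc2 (j+4) r₀ hr₀
  have L1 := leibniz_on hU hfP hd2 (j+4) r₀ hr₀
  have L2 := leibniz_on hU hfQ hd1 (j+4) r₀ hr₀
  have L3 := leibniz_on hU hfW hR (j+4) r₀ hr₀
  have E := E0
  rw [E1, E2, L1, L2, L3] at E
  have T : ∀ (F : ℕ → ℂ), (∀ k, 5 ≤ k → F k = 0) →
      ∑ k ∈ Finset.range (j+4+1), F k = ∑ k ∈ Finset.range 5, F k := by
    intro F hF
    refine (Finset.sum_subset (fun k hk => ?_) (fun k _ hk5 => hF k ?_)).symm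
    · simp only [Finset.mem_range] at hk ⊢; omega
    · simp only [Finset.mem_range] at hk5; omega
  rw [T _ (fun k hk => by rw [itQ4_of_ge _ _ _ _ _ hk]; ring),
      T _ (fun k hk => by rw [itQ4_of_ge _ _ _ _ _ hk]; ring),
      T _ (fun k hk => by rw [itQ4_of_ge _ _ _ _ _ hk]; ring)] at E
  simp only [Finset.sum_range_succ, Finset.sum_range_zero, zero_add] at E
  simp only [iteratedDeriv_zero, itQ4_one, itQ4_two, itQ4_three, itQ4_four] at E
  have i1 : j+4-1 = j+3 := by omega
  have i2 : j+4-2 = j+2 := by omega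
  have i3 : j+4-3 = j+1 := by omega
  have i4 : j+4-4 = j := by omega
  have hstep : ∀ (mm : ℕ) (f : ℝ → ℂ),
      iteratedDeriv mm (deriv f) r₀ = iteratedDeriv (mm+1) f r₀ :=
    fun mm f => by rw [iteratedDeriv_succ']
  simp only [Nat.sub_zero, i1, i2, i3, i4, hstep] at E
  simp only [Nat.choose_zero_right, Nat.choose_one_right, Nat.cast_one] at E
  rw [choose2_c j, choose3_c j, choose4_c j] at E
  have e6 : j+4+1+1 = j+6 := by omega
  have e5a : j+3+1+1 = j+5 := by omega
  have e4a : j+2+1+1 = j+4 := by omega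
  have e3a : j+1+1+1 = j+3 := by omega
  have e2a : j+1+1 = j+2 := by omega
  have e5b : j+4+1 = j+5 := by omega
  have e4b : j+3+1 = j+4 := by omega
  have e3b : j+2+1 = j+3 := by omega
  have g6 : j+4+2 = j+6 := by omega
  simp only [e6, e5a, e4a, e3a, e2a, e5b, e4b, e3b] at E
  rw [hWeq]
  simp only [deriv_Q4]
  simp only [g6, e5b, i1, i2, i3, i4]
  simp only [Q4, Δfun] at E ⊢
  push_cast at E ⊢
  linear_combination E
end

section
/- Define x(r) = (r₊ − r)/(2κ) (so x(r) < 0 for r > r₊) and T(x) = e^{iεκx} · (−x)^{−s − i(ε+τ)/2} · (1−x)^{i(ε−τ)/2} for x < 0, where the powers are of positive real bases (t^c = exp(c·log t) with the real logarithm of t > 0). If P : (−∞,0) → ℂ is twice differentiable and satisfies Equation (P) on (−∞,0), then the function R(r) = T(x(r)) · P(x(r)) satisfies the homogeneous radial Teukolsky equation for all r ∈ (r₊, ∞). -/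
open Set Complex

/-!
In the variable `x = (r₊ − r)/(2κ)` one has `r − 1 = κ(1 − 2x)` and `Δ = −4κ²x(1 − x)`, so the
Teukolsky operator becomes `−(x(1 − x)∂ₓ² + (s + 1)(1 − 2x)∂ₓ + V)`. The factor
`T = e^{iεκx}(−x)^{c₁}(1 − x)^{c₂}` has logarithmic derivative `L = iεκ + c₁/x − c₂/(1 − x)`, and
conjugating by `T` turns this operator into `x(1 − x)∂ₓ² + q₁∂ₓ + q₂` with
`q₁ = 2x(1 − x)L + (s + 1)(1 − 2x)` and `q₂ = x(1 − x)(L² + L') + (s + 1)(1 − 2x)L + V`.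
The relations `κ² = 1 − a²` and `κτ = ε − ma` enter only through
`K = κ(ε + τ − 2ε(1 + κ)x + 2εκx²)`.
-/

open Filter Topology

section ChangeOfVariable

variable {E : Type*} [NormedAddCommGroup E] [NormedSpace ℝ E]

theorem deriv_comp_const_sub_div (f : ℝ → E) (a b x : ℝ) :
    deriv (fun y => f ((a - y) / b)) x = -b⁻¹ • deriv f ((a - x) / b) := by
  simp only [div_eq_inv_mul]
  rw [deriv_comp_const_sub (f := fun z => f (b⁻¹ * z)), deriv_comp_mul_left, neg_smul]

theorem deriv_deriv_comp_const_sub_div (f : ℝ → E) (a b x : ℝ) :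
    deriv (deriv fun y => f ((a - y) / b)) x = (-b⁻¹) ^ 2 • deriv (deriv f) ((a - x) / b) := by
  rw [funext (deriv_comp_const_sub_div f a b), deriv_fun_const_smul_field,
    deriv_comp_const_sub_div, smul_smul, sq]

end ChangeOfVariable

section Conjugation

variable {f L P : ℝ → ℂ} {L' : ℂ} {x : ℝ}

theorem deriv_mul_of_hasDerivAt_self_mul (hf : HasDerivAt f (f x * L x) x)
    (hP : DifferentiableAt ℝ P x) :
    deriv (fun y => f y * P y) x = f x * (L x * P x + deriv P x) := by
  rw [(hf.fun_mul hP.hasDerivAt).deriv]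
  ring

theorem deriv_deriv_mul_of_hasDerivAt_self_mul
    (hf : ∀ᶠ y in 𝓝 x, HasDerivAt f (f y * L y) y) (hL : HasDerivAt L L' x)
    (hP : ∀ᶠ y in 𝓝 x, DifferentiableAt ℝ P y) (hP' : DifferentiableAt ℝ (deriv P) x) :
    deriv (deriv fun y => f y * P y) x =
      f x * ((L x ^ 2 + L') * P x + 2 * L x * deriv P x + deriv (deriv P) x) := by
  have hfirst : deriv (fun y => f y * P y) =ᶠ[𝓝 x] fun y => f y * (L y * P y + deriv P y) := by
    filter_upwards [hf, hP] with y hfy hPy using deriv_mul_of_hasDerivAt_self_mul hfy hPy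
  rw [hfirst.deriv_eq, (hf.self_of_nhds.fun_mul
    ((hL.fun_mul hP.self_of_nhds.hasDerivAt).fun_add hP'.hasDerivAt)).deriv]
  ring

end Conjugation

namespace Teukolsky

noncomputable def weight (e c₁ c₂ : ℂ) (x : ℝ) : ℂ :=
  exp (e * x) * exp (c₁ * Real.log (-x)) * exp (c₂ * Real.log (1 - x))

noncomputable def weightLogDeriv (e c₁ c₂ : ℂ) (x : ℝ) : ℂ :=
  e + c₁ / x - c₂ / (1 - x)

variable {e c₁ c₂ : ℂ} {x : ℝ}

theorem hasDerivAt_weight (hx₀ : x ≠ 0) (hx₁ : x ≠ 1) :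
    HasDerivAt (weight e c₁ c₂) (weight e c₁ c₂ x * weightLogDeriv e c₁ c₂ x) x := by
  have hlog₀ : HasDerivAt (fun t : ℝ => Real.log (-t)) x⁻¹ x := by
    simpa using ((hasDerivAt_neg x).log (neg_ne_zero.mpr hx₀))
  have hlog₁ : HasDerivAt (fun t : ℝ => Real.log (1 - t)) (-1 / (1 - x)) x := by
    simpa using ((hasDerivAt_id x).const_sub 1).log (sub_ne_zero.mpr hx₁.symm)
  have hlin : HasDerivAt (fun t : ℝ => e * (t : ℂ)) e x := by
    simpa using ((hasDerivAt_id x).ofReal_comp).const_mul e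
  have h := ((hlin.cexp.fun_mul (hlog₀.ofReal_comp.const_mul c₁).cexp).fun_mul
    (hlog₁.ofReal_comp.const_mul c₂).cexp)
  refine h.congr_deriv ?_
  simp only [weight, weightLogDeriv]
  push_cast
  ring

theorem hasDerivAt_weightLogDeriv (hx₀ : x ≠ 0) (hx₁ : x ≠ 1) :
    HasDerivAt (weightLogDeriv e c₁ c₂) (-c₁ / x ^ 2 - c₂ / (1 - x) ^ 2) x := by
  have hx₀' : (x : ℂ) ≠ 0 := ofReal_ne_zero.mpr hx₀
  have hx₁' : 1 - (x : ℂ) ≠ 0 := sub_ne_zero.mpr (by exact_mod_cast hx₁.symm)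
  have hid : HasDerivAt (fun t : ℝ => (t : ℂ)) 1 x := (hasDerivAt_id x).ofReal_comp
  refine (((hasDerivAt_const x e).fun_add ((hasDerivAt_const x c₁).fun_div hid hx₀')).fun_sub
    ((hasDerivAt_const x c₂).fun_div (hid.const_sub 1) hx₁')).congr_deriv ?_
  ring

theorem eventually_hasDerivAt_of_eqOn_weight {T : ℝ → ℂ} (hT : EqOn T (weight e c₁ c₂) (Iio 0))
    (hx : x < 0) : ∀ᶠ y in 𝓝 x, HasDerivAt T (T y * weightLogDeriv e c₁ c₂ y) y := by
  filter_upwards [Iio_mem_nhds hx] with y hy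
  have hTy : T =ᶠ[𝓝 y] weight e c₁ c₂ := eventually_of_mem (Iio_mem_nhds hy) hT
  rw [hTy.eq_of_nhds]
  exact (hasDerivAt_weight hy.ne (hy.trans one_pos).ne).congr_of_eventuallyEq hTy

theorem Δfun_eq {a κ r X : ℝ} (hκ : κ ^ 2 = 1 - a ^ 2) (hr : r = 1 + κ - 2 * κ * X) :
    Δfun a r = -(4 * κ ^ 2 * X * (1 - X)) := by
  rw [Δfun, hr]
  linear_combination hκ

theorem radial_operator_eq {a κ r X : ℝ} (s V G₀ G₁ G₂ : ℂ) (hκ₀ : κ ≠ 0)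
    (hκ : κ ^ 2 = 1 - a ^ 2) (hr : r = 1 + κ - 2 * κ * X) :
    (Δfun a r : ℂ) * ((-(2 * κ)⁻¹) ^ 2 • G₂) + 2 * (s + 1) * (r - 1) * (-(2 * κ)⁻¹ • G₁) - V * G₀
      = -(X * (1 - X) * G₂ + (s + 1) * (1 - 2 * X) * G₁ + V * G₀) := by
  have hκ₀' : (κ : ℂ) ≠ 0 := ofReal_ne_zero.mpr hκ₀
  rw [Δfun_eq hκ hr, hr]
  simp only [real_smul]
  push_cast
  field_simp
  ring

theorem Kfun_eq {a κ r X : ℝ} {m : ℤ} {ω ε τ : ℂ} (hκ : κ ^ 2 = 1 - a ^ 2)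
    (hr : r = 1 + κ - 2 * κ * X) (hε : ε = 2 * ω) (hτ : κ * τ = ε - m * a) :
    Kfun a m ω r = κ * (ε + τ - 2 * ε * (1 + κ) * X + 2 * ε * κ * X ^ 2) := by
  have hκ' : (κ : ℂ) ^ 2 = 1 - (a : ℂ) ^ 2 := by exact_mod_cast hκ
  rw [Kfun, hr, hε]
  push_cast
  linear_combination ω * hκ' - hτ - hε

theorem coeff_deriv_eq (s ε τ κ : ℂ) {X : ℝ} (hX₀ : X ≠ 0) (hX₁ : X ≠ 1) :
    2 * X * (1 - X) * weightLogDeriv (I * ε * κ) (-s - I * (ε + τ) / 2) (I * (ε - τ) / 2) X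
      + (s + 1) * (1 - 2 * X)
    = 1 - s - I * ε - I * τ - 2 * (1 - I * ε * κ - I * τ) * X - 2 * I * ε * κ * X ^ 2 := by
  have hX₀' : (X : ℂ) ≠ 0 := ofReal_ne_zero.mpr hX₀
  have hX₁' : 1 - (X : ℂ) ≠ 0 := sub_ne_zero.mpr (by exact_mod_cast hX₁.symm)
  simp only [weightLogDeriv]
  field_simp
  ring

theorem coeff_self_eq {a κ r X : ℝ} {s m : ℤ} {ω lam ε τ : ℂ} (hX₀ : X ≠ 0) (hX₁ : X ≠ 1)
    (hκ₀ : κ ≠ 0) (hκ : κ ^ 2 = 1 - a ^ 2) (hr : r = 1 + κ - 2 * κ * X) (hε : ε = 2 * ω)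
    (hτ : κ * τ = ε - m * a) :
    X * (1 - X) * (weightLogDeriv (I * ε * κ) (-s - I * (ε + τ) / 2) (I * (ε - τ) / 2) X ^ 2
        + (-(-s - I * (ε + τ) / 2) / X ^ 2 - I * (ε - τ) / 2 / (1 - X) ^ 2))
      + (s + 1) * (1 - 2 * X)
        * weightLogDeriv (I * ε * κ) (-s - I * (ε + τ) / 2) (I * (ε - τ) / 2) X
      + Vfun a s m ω lam r
    = lam - ε ^ 2 + I * ε * κ * (1 - 2 * s) + s * (s + 1) + τ * (I + τ)
      + 2 * ε * κ * (-I + I * s + ε - τ) * X := by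
  have hX₀' : (X : ℂ) ≠ 0 := ofReal_ne_zero.mpr hX₀
  have hX₁' : 1 - (X : ℂ) ≠ 0 := sub_ne_zero.mpr (by exact_mod_cast hX₁.symm)
  have hκ₀' : (κ : ℂ) ≠ 0 := ofReal_ne_zero.mpr hκ₀
  have hr' : (r : ℂ) = 1 + κ - 2 * κ * X := by exact_mod_cast hr
  rw [Vfun, Kfun_eq hκ hr hε hτ, Δfun_eq hκ hr, hr', hε]
  simp only [weightLogDeriv]
  push_cast
  field_simp
  ring_nf
  simp only [I_sq]
  ring

end Teukolsky

theorem transformed_solution_solves_teukolsky_general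
    (a : ℝ) (ha : |a| < 1) (s m : ℤ) (ω lam : ℂ)
    (κ : ℝ) (hκ : κ = Real.sqrt (1 - a ^ 2))
    (rp : ℝ) (hrp : rp = 1 + κ)
    (ε τ : ℂ) (hε : ε = 2 * ω) (hτ : τ = (ε - (m : ℂ) * (a : ℂ)) / (κ : ℂ))
    (T : ℝ → ℂ)
    (hT : ∀ x : ℝ, x < 0 →
      T x = Complex.exp (I * ε * (κ : ℂ) * (x : ℂ))
        * Complex.exp ((-(s : ℂ) - I * (ε + τ) / 2) * (Real.log (-x) : ℂ))
        * Complex.exp ((I * (ε - τ) / 2) * (Real.log (1 - x) : ℂ)))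
    (q₁ q₂ : ℝ → ℂ)
    (hq₁ : ∀ x : ℝ, q₁ x = (1 - (s : ℂ) - I * ε - I * τ)
      - 2 * (1 - I * ε * (κ : ℂ) - I * τ) * (x : ℂ) - 2 * I * ε * (κ : ℂ) * (x : ℂ) ^ 2)
    (hq₂ : ∀ x : ℝ, q₂ x = lam - ε ^ 2 + I * ε * (κ : ℂ) * (1 - 2 * (s : ℂ))
      + (s : ℂ) * ((s : ℂ) + 1) + τ * (I + τ)
      + 2 * ε * (κ : ℂ) * (-I + I * (s : ℂ) + ε - τ) * (x : ℂ))
    (P : ℝ → ℂ)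
    (hP : ∀ x ∈ Iio (0 : ℝ), DifferentiableAt ℝ P x)
    (hP' : ∀ x ∈ Iio (0 : ℝ), DifferentiableAt ℝ (deriv P) x)
    (heqP : ∀ x ∈ Iio (0 : ℝ),
      (x : ℂ) * (1 - (x : ℂ)) * deriv (deriv P) x + q₁ x * deriv P x + q₂ x * P x = 0)
    (R : ℝ → ℂ)
    (hR : ∀ r : ℝ, R r = T ((rp - r) / (2 * κ)) * P ((rp - r) / (2 * κ))) :
    ∀ r ∈ Ioi rp,
      ((Δfun a r : ℝ) : ℂ) * deriv (deriv R) r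
        + 2 * ((s : ℂ) + 1) * ((r : ℂ) - 1) * deriv R r
        - Vfun a s m ω lam r * R r = 0 := by
  intro r hr
  have ha2 : 0 < 1 - a ^ 2 := by nlinarith [abs_lt.mp ha]
  have hκ₀ : 0 < κ := hκ ▸ Real.sqrt_pos.mpr ha2
  have hκ2 : κ ^ 2 = 1 - a ^ 2 := hκ ▸ Real.sq_sqrt ha2.le
  have hκτ : (κ : ℂ) * τ = ε - m * a := by rw [hτ, mul_div_cancel₀ _ (ofReal_ne_zero.mpr hκ₀.ne')]
  set X := (rp - r) / (2 * κ) with hX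
  have hX₀ : X < 0 := div_neg_of_neg_of_pos (by linarith [mem_Ioi.mp hr]) (by positivity)
  have hX₁ : X ≠ 1 := (hX₀.trans one_pos).ne
  have hrX : r = 1 + κ - 2 * κ * X := by rw [hX, hrp]; field_simp; ring
  have hTL := Teukolsky.eventually_hasDerivAt_of_eqOn_weight (fun x hx => hT x hx) hX₀
  have hode := heqP X hX₀
  rw [hq₁, ← Teukolsky.coeff_deriv_eq _ _ _ _ hX₀.ne hX₁, hq₂,
    ← Teukolsky.coeff_self_eq hX₀.ne hX₁ hκ₀.ne' hκ2 hrX hε hκτ] at hode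
  rw [funext hR, deriv_deriv_comp_const_sub_div (fun x => T x * P x),
    deriv_comp_const_sub_div (fun x => T x * P x),
    deriv_deriv_mul_of_hasDerivAt_self_mul hTL (Teukolsky.hasDerivAt_weightLogDeriv hX₀.ne hX₁)
      (eventually_of_mem (Iio_mem_nhds hX₀) hP) (hP' X hX₀),
    deriv_mul_of_hasDerivAt_self_mul hTL.self_of_nhds (hP X hX₀),
    Teukolsky.radial_operator_eq _ _ _ _ _ hκ₀.ne' hκ2 hrX]
  linear_combination (-T X) * hode

/-- If `P` solves Equation (P) on `(−∞,0)`, then `R(r) = T(x(r)) P(x(r))`, with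
`x(r) = (r₊−r)/(2κ)` and `T(x) = e^{iεκx}(−x)^{−s−i(ε+τ)/2}(1−x)^{i(ε−τ)/2}`,
solves the homogeneous radial Teukolsky equation on `(r₊, ∞)`. -/
theorem transformed_solution_solves_teukolsky
    (a : ℝ) (ha : |a| < 1) (s m : ℤ) (ω lam : ℂ) (hω : ω ≠ 0)
    (κ : ℝ) (hκ : κ = Real.sqrt (1 - a ^ 2))
    (rp : ℝ) (hrp : rp = 1 + κ)
    (ε τ : ℂ) (hε : ε = 2 * ω) (hτ : τ = (ε - (m : ℂ) * (a : ℂ)) / (κ : ℂ))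
    (T : ℝ → ℂ)
    (hT : ∀ x : ℝ, x < 0 →
      T x = Complex.exp (I * ε * (κ : ℂ) * (x : ℂ))
        * Complex.exp ((-(s : ℂ) - I * (ε + τ) / 2) * (Real.log (-x) : ℂ))
        * Complex.exp ((I * (ε - τ) / 2) * (Real.log (1 - x) : ℂ)))
    (q₁ q₂ : ℝ → ℂ)
    (hq₁ : ∀ x : ℝ, q₁ x = (1 - (s : ℂ) - I * ε - I * τ)
      - 2 * (1 - I * ε * (κ : ℂ) - I * τ) * (x : ℂ) - 2 * I * ε * (κ : ℂ) * (x : ℂ) ^ 2)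
    (hq₂ : ∀ x : ℝ, q₂ x = lam - ε ^ 2 + I * ε * (κ : ℂ) * (1 - 2 * (s : ℂ))
      + (s : ℂ) * ((s : ℂ) + 1) + τ * (I + τ)
      + 2 * ε * (κ : ℂ) * (-I + I * (s : ℂ) + ε - τ) * (x : ℂ))
    (P : ℝ → ℂ)
    (hP : ∀ x ∈ Iio (0 : ℝ), DifferentiableAt ℝ P x)
    (hP' : ∀ x ∈ Iio (0 : ℝ), DifferentiableAt ℝ (deriv P) x)
    (heqP : ∀ x ∈ Iio (0 : ℝ),
      (x : ℂ) * (1 - (x : ℂ)) * deriv (deriv P) x + q₁ x * deriv P x + q₂ x * P x = 0)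
    (R : ℝ → ℂ)
    (hR : ∀ r : ℝ, R r = T ((rp - r) / (2 * κ)) * P ((rp - r) / (2 * κ))) :
    ∀ r ∈ Ioi rp,
      ((Δfun a r : ℝ) : ℂ) * deriv (deriv R) r
        + 2 * ((s : ℂ) + 1) * ((r : ℂ) - 1) * deriv R r
        - Vfun a s m ω lam r * R r = 0 :=
  transformed_solution_solves_teukolsky_general a ha s m ω lam κ hκ rp hrp ε τ hε hτ T hT q₁ q₂ hq₁
    hq₂ P hP hP' heqP R hR
end

section
/- For every real κ with 0 < κ < 1, every complex root z of the quartic polynomial z⁴ − (2/κ + 2)z³ + ((7+12κ)/(4κ²) + 1)z² − ((κ + 4(1−κ)²)/(4κ³))z + (1−κ)²/(4κ⁴) has strictly positive real part. -/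
/-!
Substituting `s = -κ z` and clearing denominators turns the quartic into
`4 s⁴ + 8(1+κ) s³ + (7+12κ+4κ²) s² + (4κ²-7κ+4) s + (1-κ)²`, whose coefficients are positive
and satisfy the Routh–Hurwitz inequality for `0 < κ < 1`; hence all its roots have `re s < 0`.
The criterion itself is proved by splitting off the quadratic factor of a non-real root `s` with
`re s ≥ 0`: the Hurwitz determinant then equals `-2 (re s) b (…)` with `b, (…) > 0`.
-/

open Complex

theorem Complex.sq_sub_two_re_mul_add_normSq (s : ℂ) : s ^ 2 - 2 * s.re * s + normSq s = 0 := by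
  have h := add_conj s
  push_cast at h
  linear_combination s * h - mul_conj s

theorem Complex.eq_zero_of_ofReal_mul_add_ofReal_eq_zero {r₁ r₀ : ℝ} {s : ℂ} (hs : s.im ≠ 0)
    (h : r₁ * s + r₀ = 0) : r₁ = 0 ∧ r₀ = 0 := by
  have him := congrArg im h
  have hre := congrArg re h
  simp only [add_im, mul_im, ofReal_re, ofReal_im, zero_mul, add_zero, zero_im, add_re, mul_re,
    sub_zero, zero_re] at him hre
  have hr₁ : r₁ = 0 := (mul_eq_zero.mp him).resolve_right hs
  exact ⟨hr₁, by simpa [hr₁] using hre⟩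

/-- A real quartic with a non-real root `s` is divisible by `X² - 2 (re s) X + |s|²`. -/
theorem exists_quartic_factor_of_im_ne_zero {a₄ a₃ a₂ a₁ a₀ : ℝ} {s : ℂ} (hs : s.im ≠ 0)
    (hroot : a₄ * s ^ 4 + a₃ * s ^ 3 + a₂ * s ^ 2 + a₁ * s + a₀ = 0) :
    ∃ b c : ℝ, a₃ = b - 2 * s.re * a₄ ∧ a₂ = c - 2 * s.re * b + normSq s * a₄ ∧
      a₁ = normSq s * b - 2 * s.re * c ∧ a₀ = normSq s * c := by
  obtain ⟨b, hb⟩ : ∃ b : ℝ, a₃ = b - 2 * s.re * a₄ := ⟨a₃ + 2 * s.re * a₄, by ring⟩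
  obtain ⟨c, hc⟩ : ∃ c : ℝ, a₂ = c - 2 * s.re * b + normSq s * a₄ :=
    ⟨a₂ + 2 * s.re * b - normSq s * a₄, by ring⟩
  refine ⟨b, c, hb, hc, ?_⟩
  subst hb hc
  have hrem : ((a₁ - (normSq s * b - 2 * s.re * c) : ℝ) : ℂ) * s + (a₀ - normSq s * c : ℝ) = 0 := by
    push_cast at hroot ⊢
    linear_combination hroot - (a₄ * s ^ 2 + b * s + c) * sq_sub_two_re_mul_add_normSq s
  obtain ⟨h₁, h₀⟩ := eq_zero_of_ofReal_mul_add_ofReal_eq_zero hs hrem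
  exact ⟨by linarith, by linarith⟩

/-- The Routh–Hurwitz criterion for real quartics. -/
theorem re_neg_of_quartic_eq_zero_of_hurwitz {a₄ a₃ a₂ a₁ a₀ : ℝ} (h₄ : 0 < a₄) (h₃ : 0 < a₃)
    (h₁ : 0 < a₁) (h₀ : 0 < a₀) (hΔ : a₄ * a₁ ^ 2 + a₀ * a₃ ^ 2 < a₃ * a₂ * a₁) {s : ℂ}
    (hroot : a₄ * s ^ 4 + a₃ * s ^ 3 + a₂ * s ^ 2 + a₁ * s + a₀ = 0) : s.re < 0 := by
  by_contra! hre
  by_cases him : s.im = 0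
  · have h₂ : 0 < a₂ :=
      pos_of_mul_pos_right (pos_of_mul_pos_left (lt_of_le_of_lt (by positivity) hΔ) h₁.le) h₃.le
    have hs : s = s.re := ext rfl (by simpa using him)
    rw [hs] at hroot
    have hroot' : a₄ * s.re ^ 4 + a₃ * s.re ^ 3 + a₂ * s.re ^ 2 + a₁ * s.re + a₀ = 0 := by
      exact_mod_cast hroot
    have : 0 < a₄ * s.re ^ 4 + a₃ * s.re ^ 3 + a₂ * s.re ^ 2 + a₁ * s.re + a₀ := by positivity
    linarith
  · obtain ⟨b, c, hb, hc, hb₁, hc₀⟩ := exists_quartic_factor_of_im_ne_zero him hroot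
    -- Orlando's formula: the Hurwitz determinant is the product of the sums of pairs of roots.
    have horlando : a₃ * a₂ * a₁ - a₄ * a₁ ^ 2 - a₀ * a₃ ^ 2
        = -(2 * s.re * b * ((a₄ * normSq s - c) ^ 2 + a₃ * a₁)) := by
      rw [hc, hb₁, hc₀, hb]
      ring
    have hb_pos : 0 < b := by
      have := mul_nonneg hre h₄.le
      linarith
    have : 0 ≤ 2 * s.re * b * ((a₄ * normSq s - c) ^ 2 + a₃ * a₁) := by positivity
    linarith

/-- All roots of the transition-point quartic lie in the open right half-plane. -/
theorem quartic_roots_positive_real_part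
    (κ : ℝ) (h0 : 0 < κ) (h1 : κ < 1) (z : ℂ)
    (hz : z ^ 4 - (2 / (κ : ℂ) + 2) * z ^ 3
        + ((7 + 12 * (κ : ℂ)) / (4 * (κ : ℂ) ^ 2) + 1) * z ^ 2
        - (((κ : ℂ) + 4 * (1 - (κ : ℂ)) ^ 2) / (4 * (κ : ℂ) ^ 3)) * z
        + (1 - (κ : ℂ)) ^ 2 / (4 * (κ : ℂ) ^ 4) = 0) :
    0 < z.re := by
  have hκ : (κ : ℂ) ≠ 0 := ofReal_ne_zero.mpr h0.ne'
  have hroot : (4 : ℝ) * (-κ * z) ^ 4 + (8 * (1 + κ) : ℝ) * (-κ * z) ^ 3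
      + (7 + 12 * κ + 4 * κ ^ 2 : ℝ) * (-κ * z) ^ 2 + (4 * κ ^ 2 - 7 * κ + 4 : ℝ) * (-κ * z)
      + ((1 - κ) ^ 2 : ℝ) = 0 := by
    push_cast
    linear_combination (norm := (field_simp; ring)) 4 * (κ : ℂ) ^ 4 * hz
  have hre := re_neg_of_quartic_eq_zero_of_hurwitz (by norm_num) (by positivity) (by nlinarith)
    (pow_pos (sub_pos.mpr h1) 2) (by nlinarith) hroot
  simp only [neg_mul, neg_re, re_ofReal_mul, neg_neg_iff_pos] at hre
  exact pos_of_mul_pos_right hre h0.le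
end

section
/- Assume n − s − i(τ+ε) ≠ 0 for every integer n ≥ 1. Define (a_n)_{n≥−1} by a_{−1} = 0, a₀ = 1, and, for all n ≥ 1, a_n = [−λ + (n−s−iτ−1)(n+s−iτ) + iκε(−2n+2s+1) + ε²] / (n(n−s−i(τ+ε))) · a_{n−1} + [2iκε((n−s−1) − i(τ−ε))] / (n(n−s−i(τ+ε))) · a_{n−2}. Suppose the power series Σ_{n≥0} a_n zⁿ has radius of convergence ρ > 0. Then the function P(z) = Σ_{n≥0} a_n zⁿ satisfies z(1−z)P″(z) + q₁(z)P′(z) + q₂(z)P(z) = 0 for all complex z with |z| < ρ. -/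
/-!
Differentiation and multiplication by `z` act on the coefficients of a power series inside its
disc of convergence, so the left side of (P) is the power series whose `k`-th coefficient is
`(k+1)(k+α₀) x_{k+1} + (α₁k − k(k−1) + β₀) x_k + (α₂(k−1) + β₁) x_{k−1}`, where
`α₀ + α₁z + α₂z² = q₁(z)` and `β₀ + β₁z = q₂(z)`. Once its denominators are cleared, the
recurrence says precisely that this coefficient vanishes, up to `I² = -1`.
-/

open Complex

section PowerSeries

variable {𝕜 : Type*} [RCLike 𝕜]

def coeffShift {α : Type*} [Zero α] (u : ℕ → α) : ℕ → α
  | 0 => 0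
  | n + 1 => u n

@[simp] theorem coeffShift_zero {α : Type*} [Zero α] (u : ℕ → α) : coeffShift u 0 = 0 := rfl

@[simp] theorem coeffShift_succ {α : Type*} [Zero α] (u : ℕ → α) (n : ℕ) :
    coeffShift u (n + 1) = u n := rfl

theorem HasSum.mul_left_coeffShift {R : Type*} [CommRing R] [TopologicalSpace R]
    [IsTopologicalRing R] {u : ℕ → R} {z S : R}
    (h : HasSum (fun n => u n * z ^ n) S) :
    HasSum (fun n => coeffShift u n * z ^ n) (z * S) := by
  have h' : HasSum (fun n => coeffShift u (n + 1) * z ^ (n + 1)) (z * S) :=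
    (h.mul_left z).congr_fun fun n => by rw [coeffShift_succ, pow_succ]; ring
  simpa only [Finset.sum_range_one, coeffShift_zero, zero_mul, add_zero] using
    (hasSum_nat_add_iff (f := fun n => coeffShift u n * z ^ n) 1).mp h'

def derivCoeff (c : ℕ → 𝕜) (n : ℕ) : 𝕜 := (n + 1) * c (n + 1)

theorem coeffShift_derivCoeff (c : ℕ → 𝕜) :
    coeffShift (derivCoeff c) = fun n : ℕ => (n : 𝕜) * c n := by
  ext (_ | n) <;> simp [derivCoeff]

theorem coeffShift_natCast_mul (c : ℕ → 𝕜) (n : ℕ) :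
    coeffShift (fun k => (k : 𝕜) * c k) n = (n - 1) * coeffShift c n := by
  cases n <;> simp

theorem hasFPowerSeriesOnBall_ofScalars_of_hasSum {c : ℕ → 𝕜} {f : 𝕜 → 𝕜} {ρ : ℝ} (hρ : 0 < ρ)
    (hf : ∀ z : 𝕜, ‖z‖ < ρ → HasSum (fun n => c n * z ^ n) (f z)) :
    HasFPowerSeriesOnBall f (FormalMultilinearSeries.ofScalars 𝕜 c) 0 (ENNReal.ofReal ρ) := by
  refine ⟨?_, ENNReal.ofReal_pos.mpr hρ, fun {z} hz => ?_⟩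
  · refine ENNReal.le_of_forall_nnreal_lt fun r hr => ?_
    have hrρ : (r : ℝ) < ρ := by
      rwa [← ENNReal.ofReal_coe_nnreal, ENNReal.ofReal_lt_ofReal_iff hρ] at hr
    refine FormalMultilinearSeries.le_radius_of_summable _ ?_
    have hr' : ‖((r : ℝ) : 𝕜)‖ = r := by simp
    refine ((hf _ (hr'.trans_lt hrρ)).summable.norm).congr fun n => ?_
    rw [norm_mul, norm_pow, hr', FormalMultilinearSeries.ofScalars_norm]
  · rw [Metric.eball_ofReal, mem_ball_zero_iff] at hz
    simpa [FormalMultilinearSeries.ofScalars_apply_eq, mul_comm] using hf z hz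

theorem hasSum_derivCoeff {c : ℕ → 𝕜} {f : 𝕜 → 𝕜} {ρ : ℝ}
    (hf : ∀ z : 𝕜, ‖z‖ < ρ → HasSum (fun n => c n * z ^ n) (f z)) {z : 𝕜} (hz : ‖z‖ < ρ) :
    HasSum (fun n => derivCoeff c n * z ^ n) (deriv f z) := by
  have hρ : 0 < ρ := (norm_nonneg z).trans_lt hz
  have hz' : z ∈ Metric.eball 0 (ENNReal.ofReal ρ) := by
    rwa [Metric.eball_ofReal, mem_ball_zero_iff]
  have h := ((hasFPowerSeriesOnBall_ofScalars_of_hasSum hρ hf).fderiv.hasSum_sub hz').mapL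
    (ContinuousLinearMap.apply 𝕜 𝕜 1)
  refine h.congr_fun fun n => ?_
  simp [derivCoeff, mul_comm]

theorem series_solves_ode_of_coeff_recurrence (α₀ α₁ α₂ β₀ β₁ : 𝕜) {c : ℕ → 𝕜}
    (hc : ∀ k : ℕ, (k + 1) * (k + α₀) * c (k + 1) + (α₁ * k - k * (k - 1) + β₀) * c k
      + (α₂ * (k - 1) + β₁) * coeffShift c k = 0)
    {f : 𝕜 → 𝕜} {ρ : ℝ} (hf : ∀ z : 𝕜, ‖z‖ < ρ → HasSum (fun n => c n * z ^ n) (f z))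
    {z : 𝕜} (hz : ‖z‖ < ρ) :
    z * (1 - z) * deriv (deriv f) z + (α₀ + α₁ * z + α₂ * z ^ 2) * deriv f z
      + (β₀ + β₁ * z) * f z = 0 := by
  have h₀ := hf z hz
  have h₁ := hasSum_derivCoeff hf hz
  have h₂ := hasSum_derivCoeff (fun _ => hasSum_derivCoeff hf) hz
  have h := (((((h₂.mul_left_coeffShift.sub h₂.mul_left_coeffShift.mul_left_coeffShift).add
    (h₁.mul_left α₀)).add (h₁.mul_left_coeffShift.mul_left α₁)).add
    (h₁.mul_left_coeffShift.mul_left_coeffShift.mul_left α₂)).add (h₀.mul_left β₀)).add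
    (h₀.mul_left_coeffShift.mul_left β₁)
  have h0 := (h.congr_fun (g := fun _ => 0) fun n => ?_).unique hasSum_zero
  · linear_combination h0
  simp only [coeffShift_derivCoeff, coeffShift_natCast_mul]
  simp only [derivCoeff]
  linear_combination -z ^ n * hc n

end PowerSeries

theorem denom_mul_eq_of_three_term_recurrence {K : Type*} [Field K] {A B D : K → K} {x : ℕ → K}
    (hD : ∀ n : ℕ, 1 ≤ n → D n ≠ 0)
    (hx₁ : x 1 = A 1 / D 1 * x 0)
    (hrec : ∀ n : ℕ, 2 ≤ n → x n = A n / D n * x (n - 1) + B n / D n * x (n - 2)) (n : ℕ) :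
    D (n + 1) * x (n + 1) = A (n + 1) * x n + B (n + 1) * coeffShift x n := by
  rcases n with _ | n
  · have hD₁ : D 1 ≠ 0 := by simpa using hD 1 le_rfl
    rw [Nat.cast_zero, zero_add, coeffShift_zero, mul_zero, add_zero, hx₁]
    field_simp
  · have hcast : ((n + 1 : ℕ) : K) + 1 = (n + 2 : ℕ) := by push_cast; ring
    rw [hcast, hrec (n + 2) (by omega), show n + 2 - 1 = n + 1 from rfl,
      show n + 2 - 2 = n from rfl, coeffShift_succ]
    have hD₂ : D (n + 2 : ℕ) ≠ 0 := hD (n + 2) (by omega)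
    field_simp

theorem horizon_series_solves_eqP_general
    (s : ℤ) (lam : ℂ)
    (κ : ℝ)
    (ε τ : ℂ)
    (hnz : ∀ n : ℕ, 1 ≤ n → (n : ℂ) - (s : ℂ) - I * (τ + ε) ≠ 0)
    (x : ℕ → ℂ)
    (hx1 : x 1 = ((-lam + ((1 : ℂ) - (s : ℂ) - I * τ - 1) * ((1 : ℂ) + (s : ℂ) - I * τ)
        + I * (κ : ℂ) * ε * (-2 * (1 : ℂ) + 2 * (s : ℂ) + 1) + ε ^ 2)
      / ((1 : ℂ) * ((1 : ℂ) - (s : ℂ) - I * (τ + ε)))) * x 0)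
    (hrec : ∀ n : ℕ, 2 ≤ n →
      x n = ((-lam + ((n : ℂ) - (s : ℂ) - I * τ - 1) * ((n : ℂ) + (s : ℂ) - I * τ)
              + I * (κ : ℂ) * ε * (-2 * (n : ℂ) + 2 * (s : ℂ) + 1) + ε ^ 2)
            / ((n : ℂ) * ((n : ℂ) - (s : ℂ) - I * (τ + ε)))) * x (n - 1)
          + ((2 * I * (κ : ℂ) * ε * (((n : ℂ) - (s : ℂ) - 1) - I * (τ - ε)))
            / ((n : ℂ) * ((n : ℂ) - (s : ℂ) - I * (τ + ε)))) * x (n - 2))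
    (ρ : ℝ)
    (P : ℂ → ℂ)
    (hP : ∀ z : ℂ, ‖z‖ < ρ → HasSum (fun n : ℕ => x n * z ^ n) (P z)) :
    ∀ z : ℂ, ‖z‖ < ρ →
      z * (1 - z) * deriv (deriv P) z
        + ((1 - (s : ℂ) - I * ε - I * τ) - 2 * (1 - I * ε * (κ : ℂ) - I * τ) * z
            - 2 * I * ε * (κ : ℂ) * z ^ 2) * deriv P z
        + (lam - ε ^ 2 + I * ε * (κ : ℂ) * (1 - 2 * (s : ℂ)) + (s : ℂ) * ((s : ℂ) + 1)
            + τ * (I + τ) + 2 * ε * (κ : ℂ) * (-I + I * (s : ℂ) + ε - τ) * z) * P z = 0 := by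
  intro z hz
  have hcleared := denom_mul_eq_of_three_term_recurrence
    (A := fun t => -lam + (t - s - I * τ - 1) * (t + s - I * τ) + I * κ * ε * (-2 * t + 2 * s + 1)
      + ε ^ 2)
    (B := fun t => 2 * I * κ * ε * ((t - s - 1) - I * (τ - ε)))
    (D := fun t => t * (t - s - I * (τ + ε)))
    (fun n hn => mul_ne_zero (Nat.cast_ne_zero.mpr (by omega)) (hnz n hn)) hx1 hrec
  have hode := series_solves_ode_of_coeff_recurrence (1 - s - I * ε - I * τ)
    (-2 * (1 - I * ε * κ - I * τ)) (-2 * I * ε * κ)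
    (lam - ε ^ 2 + I * ε * κ * (1 - 2 * s) + s * (s + 1) + τ * (I + τ))
    (2 * ε * κ * (-I + I * s + ε - τ))
    (fun k => by
      linear_combination hcleared k
        + (τ ^ 2 * x k - 2 * κ * ε * (τ - ε) * coeffShift x k) * I_sq) hP hz
  linear_combination hode

/-- The power series whose coefficients satisfy the horizon three-term recurrence
(with `a₋₁ = 0`, `a₀ = 1`) sums, inside its disc of convergence, to a solution of
Equation (P): `z(1−z)P″ + q₁(z)P′ + q₂(z)P = 0`. -/
theorem horizon_series_solves_eqP
    (a : ℝ) (ha : |a| < 1) (s m : ℤ) (ω lam : ℂ) (hω : ω ≠ 0)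
    (κ : ℝ) (hκ : κ = Real.sqrt (1 - a ^ 2))
    (ε τ : ℂ) (hε : ε = 2 * ω) (hτ : τ = (ε - (m : ℂ) * (a : ℂ)) / (κ : ℂ))
    (hnz : ∀ n : ℕ, 1 ≤ n → (n : ℂ) - (s : ℂ) - I * (τ + ε) ≠ 0)
    (x : ℕ → ℂ)
    (hx0 : x 0 = 1)
    (hx1 : x 1 = ((-lam + ((1 : ℂ) - (s : ℂ) - I * τ - 1) * ((1 : ℂ) + (s : ℂ) - I * τ)
        + I * (κ : ℂ) * ε * (-2 * (1 : ℂ) + 2 * (s : ℂ) + 1) + ε ^ 2)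
      / ((1 : ℂ) * ((1 : ℂ) - (s : ℂ) - I * (τ + ε)))) * x 0)
    (hrec : ∀ n : ℕ, 2 ≤ n →
      x n = ((-lam + ((n : ℂ) - (s : ℂ) - I * τ - 1) * ((n : ℂ) + (s : ℂ) - I * τ)
              + I * (κ : ℂ) * ε * (-2 * (n : ℂ) + 2 * (s : ℂ) + 1) + ε ^ 2)
            / ((n : ℂ) * ((n : ℂ) - (s : ℂ) - I * (τ + ε)))) * x (n - 1)
          + ((2 * I * (κ : ℂ) * ε * (((n : ℂ) - (s : ℂ) - 1) - I * (τ - ε)))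
            / ((n : ℂ) * ((n : ℂ) - (s : ℂ) - I * (τ + ε)))) * x (n - 2))
    (ρ : ℝ) (hρ : 0 < ρ)
    (P : ℂ → ℂ)
    (hP : ∀ z : ℂ, ‖z‖ < ρ → HasSum (fun n : ℕ => x n * z ^ n) (P z)) :
    ∀ z : ℂ, ‖z‖ < ρ →
      z * (1 - z) * deriv (deriv P) z
        + ((1 - (s : ℂ) - I * ε - I * τ) - 2 * (1 - I * ε * (κ : ℂ) - I * τ) * z
            - 2 * I * ε * (κ : ℂ) * z ^ 2) * deriv P z
        + (lam - ε ^ 2 + I * ε * (κ : ℂ) * (1 - 2 * (s : ℂ)) + (s : ℂ) * ((s : ℂ) + 1)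
            + τ * (I + τ) + 2 * ε * (κ : ℂ) * (-I + I * (s : ℂ) + ε - τ) * z) * P z = 0 :=
  horizon_series_solves_eqP_general s lam κ ε τ hnz x hx1 hrec ρ P hP
end
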